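/- arXiv:2411.14138 — 4 statements merged into one kernel-verified Lean document; each statement's English description precedes it below -/
import Mathlib

section
/- Let F be a connected graph on r ≥ 3 vertices and let A be a fixed avoidable configuration. Then for every constant ε with 0 < ε < (n(A)−1)/e(A) and every sequence π = π(n) ≤ n^ε / ((r!/aut(F)) · C(n−1, r−1)), the probability that H_F(n,π) contains a copy of A tends to 0 as n → ∞. -/
open scoped Classical
open Filter Asymptotics

noncomputable section

/-! ### Basic graph quantities -/

/-- The number of edges of a simple graph. -/
def edgeCnt {V : Type*} (G : SimpleGraph V) : ℕ := G.edgeSet.ncard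

/-- The 1-density `e(F)/(v(F)-1)` of a graph `F` on `r` vertices. -/
def d1 {r : ℕ} (F : SimpleGraph (Fin r)) : ℝ := (edgeCnt F : ℝ) / ((r : ℝ) - 1)

/-- `F` is strictly 1-balanced: every proper subgraph `S` with at least 2 vertices and at
least one edge satisfies `d₁(S) < d₁(F)`. -/
def Strictly1Balanced {r : ℕ} (F : SimpleGraph (Fin r)) : Prop :=
  ∀ S : F.Subgraph, S ≠ ⊤ → 2 ≤ S.verts.ncard → 1 ≤ S.edgeSet.ncard →
    (S.edgeSet.ncard : ℝ) / ((S.verts.ncard : ℝ) - 1) < d1 F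

/-- The number of automorphisms of `F`. -/
def autCard {r : ℕ} (F : SimpleGraph (Fin r)) : ℕ := Nat.card (F ≃g F)

/-! ### Copies of `F` in a graph, `F`-factors, `F`-isolated vertices -/

/-- `φ` is a copy of `F` in `G` (an embedding of `F` as a not necessarily induced subgraph). -/
def IsCopyIn {r n : ℕ} (F : SimpleGraph (Fin r)) (G : SimpleGraph (Fin n))
    (φ : Fin r ↪ Fin n) : Prop :=
  ∀ u v, F.Adj u v → G.Adj (φ u) (φ v)

/-- `G` contains an `F`-factor: pairwise vertex-disjoint copies of `F` covering all vertices. -/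
def HasFFactor {r n : ℕ} (F : SimpleGraph (Fin r)) (G : SimpleGraph (Fin n)) : Prop :=
  ∃ Φ : Finset (Fin r ↪ Fin n),
    (∀ φ ∈ Φ, IsCopyIn F G φ) ∧
    (∀ φ ∈ Φ, ∀ ψ ∈ Φ, φ ≠ ψ → ∀ x : Fin n, ¬(x ∈ Set.range φ ∧ x ∈ Set.range ψ)) ∧
    (∀ x : Fin n, ∃ φ ∈ Φ, x ∈ Set.range φ)

/-- Vertex `x` is `F`-isolated in `G`: no copy of `F` in `G` contains `x`. -/
def FIsolated {r n : ℕ} (F : SimpleGraph (Fin r)) (G : SimpleGraph (Fin n)) (x : Fin n) : Prop :=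
  ∀ φ : Fin r ↪ Fin n, IsCopyIn F G φ → x ∉ Set.range φ

/-! ### The random graph `G(n,p)` -/

/-- Probability of the event `P` in the Erdős–Rényi random graph `G(n,p)`. -/
def gnpProb (n : ℕ) (p : ℝ) (P : SimpleGraph (Fin n) → Prop) : ℝ :=
  ∑ G : SimpleGraph (Fin n),
    if P G then p ^ edgeCnt G * (1 - p) ^ (n.choose 2 - edgeCnt G) else 0

/-- The sharp threshold `p* = ((aut F / r!) · ln n / C(n-1, r-1))^(1/e(F))`. -/
def pstar {r : ℕ} (F : SimpleGraph (Fin r)) (n : ℕ) : ℝ :=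
  ((autCard F : ℝ) / (r.factorial : ℝ) * Real.log n / ((n - 1).choose (r - 1) : ℝ)) ^
    ((1 : ℝ) / (edgeCnt F : ℝ))

/-! ### `F`-edges and `F`-graphs -/

/-- An `F`-edge: a pair (vertex set, edge set); the copies of `F` among these are singled out
by `FEdge.IsCopyOf`. -/
abbrev FEdge (V : Type*) := Finset V × Finset (Sym2 V)

/-- `h` is a copy of `F` with vertices in `V`. -/
def FEdge.IsCopyOf {r : ℕ} {V : Type*} (h : FEdge V) (F : SimpleGraph (Fin r)) : Prop :=
  ∃ φ : Fin r → V, Function.Injective φ ∧ (↑h.1 : Set V) = Set.range φ ∧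
    (↑h.2 : Set (Sym2 V)) = Sym2.map φ '' F.edgeSet

/-- An `F`-graph: a vertex set together with a set of `F`-edges. -/
abbrev FGraph (V : Type*) := Finset V × Finset (FEdge V)

/-- Well-formedness of an `F`-graph w.r.t. `F`: every `F`-edge is a copy of `F` with
vertices inside the vertex set. -/
def FGraph.Wf {r : ℕ} {V : Type*} (H : FGraph V) (F : SimpleGraph (Fin r)) : Prop :=
  ∀ h ∈ H.2, FEdge.IsCopyOf h F ∧ h.1 ⊆ H.1

/-- The edge set of the shadow graph of an `F`-graph. -/
def shadowEdges {V : Type*} [DecidableEq V] (H : FGraph V) : Finset (Sym2 V) :=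
  H.2.sup Prod.snd

/-- The shadow graph of an `F`-graph. -/
def shadow {V : Type*} [DecidableEq V] (H : FGraph V) : SimpleGraph V :=
  SimpleGraph.fromEdgeSet ↑(shadowEdges H)

/-- Number of connected components of the shadow graph of `H` (on the vertex set of `H`). -/
def compCount {V : Type*} [DecidableEq V] (H : FGraph V) : ℕ :=
  Nat.card ((shadow H).induce (↑H.1 : Set V)).ConnectedComponent

/-- An `F`-graph is connected if its shadow graph is. -/
def FGraphConnected {V : Type*} [DecidableEq V] (H : FGraph V) : Prop :=
  ((shadow H).induce (↑H.1 : Set V)).Connected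

/-- The nullity `n(H) = (r-1)e(H) + c(H) - v(H)` of an `F`-graph. -/
def nullity (r : ℕ) {V : Type*} [DecidableEq V] (H : FGraph V) : ℤ :=
  ((r : ℤ) - 1) * H.2.card + compCount H - H.1.card

/-- An avoidable configuration: a connected `F`-graph of nullity at least 2. -/
def Avoidable {r : ℕ} {V : Type*} [DecidableEq V] (F : SimpleGraph (Fin r))
    (H : FGraph V) : Prop :=
  FGraph.Wf H F ∧ FGraphConnected H ∧ 2 ≤ nullity r H

/-- The `F`-edge `h` is induced by the `F`-graph `H`: it is a copy of `F`, not an `F`-edge of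
`H`, but all its edges lie in the shadow graph of `H`. -/
def InducedBy {r : ℕ} {V : Type*} [DecidableEq V] (F : SimpleGraph (Fin r)) (h : FEdge V)
    (H : FGraph V) : Prop :=
  FEdge.IsCopyOf h F ∧ h ∉ H.2 ∧ h.2 ⊆ shadowEdges H

/-- `C` is a clean `F`-cycle of length `k`. -/
def IsCleanCycleOfLen {r : ℕ} {V : Type*} [DecidableEq V] (F : SimpleGraph (Fin r))
    (C : FGraph V) (k : ℕ) : Prop :=
  FGraph.Wf C F ∧ C.1 = C.2.sup Prod.fst ∧
  ((k = 2 ∧ ∃ h₁ h₂ : FEdge V, h₁ ≠ h₂ ∧ C.2 = {h₁, h₂} ∧ (h₁.1 ∩ h₂.1).card = 2) ∨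
   (3 ≤ k ∧ ∃ h : Fin k → FEdge V, Function.Injective h ∧ C.2 = Finset.image h Finset.univ ∧
     ∃ v : Fin k → V, Function.Injective v ∧
       (∀ i j : Fin k, ((i : ℕ) + 1) % k = (j : ℕ) → (h i).1 ∩ (h j).1 = {v i}) ∧
       (∀ i j : Fin k, i ≠ j → ((i : ℕ) + 1) % k ≠ (j : ℕ) → ((j : ℕ) + 1) % k ≠ (i : ℕ) →
         (h i).1 ∩ (h j).1 = ∅)))

/-- `C` is a clean `F`-cycle (of some length `k ≥ 2`). -/
def IsCleanCycle {r : ℕ} {V : Type*} [DecidableEq V] (F : SimpleGraph (Fin r))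
    (C : FGraph V) : Prop :=
  ∃ k, IsCleanCycleOfLen F C k

/-- `C` is a sparse clean `F`-cycle: a clean `F`-cycle of length 2 whose two overlap vertices
form an edge of both of its `F`-edges. -/
def IsSparse {r : ℕ} {V : Type*} [DecidableEq V] (F : SimpleGraph (Fin r))
    (C : FGraph V) : Prop :=
  IsCleanCycleOfLen F C 2 ∧ ∃ h₁ h₂ : FEdge V, h₁ ≠ h₂ ∧ C.2 = {h₁, h₂} ∧
    ∃ x y : V, x ≠ y ∧ h₁.1 ∩ h₂.1 = {x, y} ∧ s(x, y) ∈ h₁.2 ∧ s(x, y) ∈ h₂.2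

/-! ### The random `F`-graph `H_F(n,π)` -/

/-- All potential `F`-edges on the vertex set `Fin n`. -/
def allFEdges (r n : ℕ) (F : SimpleGraph (Fin r)) : Finset (FEdge (Fin n)) :=
  Finset.univ.filter fun h => FEdge.IsCopyOf h F

/-- Expectation of `X` under the random `F`-graph `H_F(n,π)`, whose `F`-edge set is a random
subset of `allFEdges r n F`, each `F`-edge present independently with probability `π`. -/
def hfExp (r n : ℕ) (F : SimpleGraph (Fin r)) (π : ℝ)
    (X : Finset (FEdge (Fin n)) → ℝ) : ℝ :=
  ∑ S ∈ (allFEdges r n F).powerset,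
    π ^ S.card * (1 - π) ^ ((allFEdges r n F).card - S.card) * X S

/-- Probability of `P` under the random `F`-graph `H_F(n,π)`. -/
def hfProb (r n : ℕ) (F : SimpleGraph (Fin r)) (π : ℝ)
    (P : Finset (FEdge (Fin n)) → Prop) : ℝ :=
  hfExp r n F π fun S => if P S then 1 else 0

/-! ### Maps, isomorphisms and copies of `F`-graphs -/

/-- Image of an `F`-edge under a vertex map. -/
def FEdge.map {V W : Type*} [DecidableEq W] (ψ : V → W) (h : FEdge V) : FEdge W :=
  (h.1.image ψ, h.2.image (Sym2.map ψ))

/-- Image of an `F`-graph under a vertex map. -/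
def FGraph.map {V W : Type*} [DecidableEq V] [DecidableEq W] (ψ : V → W)
    (H : FGraph V) : FGraph W :=
  (H.1.image ψ, H.2.image (FEdge.map ψ))

/-- `H` is isomorphic to `K` via a vertex bijection mapping `F`-edges to `F`-edges. -/
def FGraph.IsoTo {V W : Type*} [DecidableEq V] [DecidableEq W] (H : FGraph V)
    (K : FGraph W) : Prop :=
  ∃ ψ : V → W, Set.InjOn ψ ↑H.1 ∧ FGraph.map ψ H = K

/-- The number of copies of the `F`-graph `H` among a set `S` of `F`-edges on `Fin n`. -/
def copyCount {V : Type*} [DecidableEq V] (H : FGraph V) {n : ℕ}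
    (S : Finset (FEdge (Fin n))) : ℕ :=
  Nat.card {K : FGraph (Fin n) // K.2 ⊆ S ∧ FGraph.IsoTo H K}

/-- Union of two `F`-graphs. -/
def FGraph.union {V : Type*} [DecidableEq V] (H K : FGraph V) : FGraph V :=
  (H.1 ∪ K.1, H.2 ∪ K.2)

/-! ### d-graphs and the random d-graph `G*(n,p)` -/

/-- A d-graph: vertices, usual edges, and dummy edges (identified with sparse clean
`F`-cycles). -/
abbrev DGraph (V : Type*) := Finset V × Finset (Sym2 V) × Finset (FGraph V)

/-- All potential usual edges on `Fin n`. -/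
def allUsual (n : ℕ) : Finset (Sym2 (Fin n)) := Finset.univ.filter fun e => ¬e.IsDiag

/-- All potential dummy edges on `Fin n`: the sparse clean `F`-cycles. -/
def allDummies (r n : ℕ) (F : SimpleGraph (Fin r)) : Finset (FGraph (Fin n)) :=
  Finset.univ.filter fun C => IsSparse F C

/-- Expectation of `X` under the random d-graph `G*(n,p)`: each usual edge and each dummy
edge is included independently with probability `p`. -/
def dgExp (r n : ℕ) (F : SimpleGraph (Fin r)) (p : ℝ)
    (X : Finset (Sym2 (Fin n)) → Finset (FGraph (Fin n)) → ℝ) : ℝ :=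
  ∑ U ∈ (allUsual n).powerset, ∑ D ∈ (allDummies r n F).powerset,
    p ^ (U.card + D.card) *
      (1 - p) ^ (((allUsual n).card - U.card) + ((allDummies r n F).card - D.card)) * X U D

/-- Probability of `P` under the random d-graph `G*(n,p)`. -/
def dgProb (r n : ℕ) (F : SimpleGraph (Fin r)) (p : ℝ)
    (P : Finset (Sym2 (Fin n)) → Finset (FGraph (Fin n)) → Prop) : ℝ :=
  dgExp r n F p fun U D => if P U D then 1 else 0

/-- Image of a d-graph under a vertex map. -/
def DGraph.map {V W : Type*} [DecidableEq V] [DecidableEq W] (ψ : V → W)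
    (K : DGraph V) : DGraph W :=
  (K.1.image ψ, K.2.1.image (Sym2.map ψ), K.2.2.image (FGraph.map ψ))

/-- `K` is isomorphic to `L` as a d-graph. -/
def DGraph.IsoTo {V W : Type*} [DecidableEq V] [DecidableEq W] (K : DGraph V)
    (L : DGraph W) : Prop :=
  ∃ ψ : V → W, Set.InjOn ψ ↑K.1 ∧ DGraph.map ψ K = L

/-- The number of copies of the d-graph `K` inside the d-graph on `Fin n` with usual edges
`U` and dummy edges `D`. -/
def dCopyCount {V : Type*} [DecidableEq V] (K : DGraph V) {n : ℕ}
    (U : Finset (Sym2 (Fin n))) (D : Finset (FGraph (Fin n))) : ℕ :=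
  Nat.card {L : DGraph (Fin n) // L.2.1 ⊆ U ∧ L.2.2 ⊆ D ∧ DGraph.IsoTo K L}

/-- Union of two d-graphs. -/
def DGraph.union {V : Type*} [DecidableEq V] (K L : DGraph V) : DGraph V :=
  (K.1 ∪ L.1, K.2.1 ∪ L.2.1, K.2.2 ∪ L.2.2)

/-- `G` is the clean d-cycle corresponding to the clean `F`-cycle `C`: the shadow graph of
`C` if `C` is dense, together with the dummy edge `C` if `C` is sparse. -/
def IsCleanDCycleOf {r : ℕ} {V : Type*} [DecidableEq V] (F : SimpleGraph (Fin r))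
    (G : DGraph V) (C : FGraph V) : Prop :=
  (IsCleanCycle F C ∧ ¬IsSparse F C ∧ G = (C.1, shadowEdges C, (∅ : Finset (FGraph V)))) ∨
  (IsSparse F C ∧ G = (C.1, shadowEdges C, ({C} : Finset (FGraph V))))

/-! First moment method. The probability that `H_F(n,π)` contains a copy of `A` is at most the
expected number of copies, which is at most `n ^ v(A) * π ^ e(A)`. Since
`C(n-1, r-1) ≥ n ^ (r-1) / (2 ^ (r-1) (r-1)!)` and `r!/aut(F) ≥ 1`, the hypothesis gives
`π = O(n ^ (ε - (r-1)))`; for connected `A` the bound on `ε` says exactly that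
`v(A) + (ε - (r-1)) e(A) < 0`, so the expectation tends to `0`. -/

open Finset Topology

section RandomSubset

variable {α β : Type*} {U T : Finset α} {p : ℝ}

/-- The probability of the outcome `S` when each element of `U` is kept independently with
probability `p`. -/
def subsetWeight (U : Finset α) (p : ℝ) (S : Finset α) : ℝ :=
  p ^ S.card * (1 - p) ^ (U.card - S.card)

lemma subsetWeight_nonneg (hp0 : 0 ≤ p) (hp1 : p ≤ 1) (S : Finset α) :
    0 ≤ subsetWeight U p S :=
  mul_nonneg (pow_nonneg hp0 _) (pow_nonneg (sub_nonneg.2 hp1) _)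

variable [DecidableEq α]

lemma sum_subsetWeight_filter_superset (hT : T ⊆ U) :
    ∑ S ∈ U.powerset with T ⊆ S, subsetWeight U p S = p ^ T.card := by
  have hcard : ∀ R ∈ (U \ T).powerset, subsetWeight U p (T ∪ R) =
      p ^ T.card * (p ^ R.card * (1 - p) ^ ((U \ T).card - R.card)) := by
    intro R hR
    have hdisj : Disjoint T R := disjoint_of_subset_right (mem_powerset.1 hR) disjoint_sdiff
    rw [subsetWeight, card_union_of_disjoint hdisj, card_sdiff_of_subset hT, pow_add,
      Nat.sub_add_eq]
    ring
  rw [← Icc_eq_filter_powerset, Icc_eq_image_powerset hT, sum_image, sum_congr rfl hcard,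
    ← mul_sum, sum_pow_mul_eq_add_pow, add_sub_cancel, one_pow, mul_one]
  intro R hR R' hR' h
  have hR : Disjoint T R := disjoint_of_subset_right (mem_powerset.1 hR) disjoint_sdiff
  have hR' : Disjoint T R' := disjoint_of_subset_right (mem_powerset.1 hR') disjoint_sdiff
  rw [← union_sdiff_cancel_left hR, ← union_sdiff_cancel_left hR']
  exact congrArg (· \ T) h

lemma sum_subsetWeight_filter_superset_le (hp0 : 0 ≤ p) (T : Finset α) :
    ∑ S ∈ U.powerset with T ⊆ S, subsetWeight U p S ≤ p ^ T.card := by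
  by_cases hT : T ⊆ U
  · exact (sum_subsetWeight_filter_superset hT).le
  · rw [filter_false_of_mem fun S hS hTS => hT (hTS.trans (mem_powerset.1 hS)), sum_empty]
    exact pow_nonneg hp0 _

/-- The union bound. -/
lemma sum_subsetWeight_ite_le_sum_pow (hp0 : 0 ≤ p) (hp1 : p ≤ 1) (P : Finset α → Prop)
    (G : Finset β) (T : β → Finset α) (hP : ∀ S ⊆ U, P S → ∃ b ∈ G, T b ⊆ S) :
    ∑ S ∈ U.powerset, subsetWeight U p S * (if P S then 1 else 0) ≤
      ∑ b ∈ G, p ^ (T b).card := by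
  have hcover : ∀ S ∈ U.powerset,
      (if P S then (1 : ℝ) else 0) ≤ ∑ b ∈ G, if T b ⊆ S then 1 else 0 := by
    intro S hS
    split_ifs with hPS
    · obtain ⟨b, hb, hbS⟩ := hP S (mem_powerset.1 hS) hPS
      exact (if_pos hbS).symm.trans_le <|
        single_le_sum (f := fun b => if T b ⊆ S then (1 : ℝ) else 0)
          (fun _ _ => by positivity) hb
    · positivity
  calc ∑ S ∈ U.powerset, subsetWeight U p S * (if P S then 1 else 0)
      ≤ ∑ S ∈ U.powerset, subsetWeight U p S * ∑ b ∈ G, if T b ⊆ S then 1 else 0 :=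
        sum_le_sum fun S hS => mul_le_mul_of_nonneg_left (hcover S hS)
          (subsetWeight_nonneg hp0 hp1 S)
    _ = ∑ b ∈ G, ∑ S ∈ U.powerset with T b ⊆ S, subsetWeight U p S := by
        simp only [mul_sum, mul_ite, mul_one, mul_zero]
        rw [sum_comm]
        simp only [sum_filter]
    _ ≤ ∑ b ∈ G, p ^ (T b).card :=
        sum_le_sum fun b _ => sum_subsetWeight_filter_superset_le hp0 (T b)

end RandomSubset

lemma hfProb_nonneg {r n : ℕ} (F : SimpleGraph (Fin r)) {p : ℝ} (hp0 : 0 ≤ p) (hp1 : p ≤ 1)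
    (P : Finset (FEdge (Fin n)) → Prop) : 0 ≤ hfProb r n F p P :=
  sum_nonneg fun S _ => mul_nonneg (subsetWeight_nonneg hp0 hp1 S) (by positivity)

lemma Sym2.map_injOn {α β : Type*} {f : α → β} {s : Set α} (hf : Set.InjOn f s) :
    Set.InjOn (Sym2.map f) {z | ∀ x ∈ z, x ∈ s} := by
  intro z hz z' hz' h
  induction z using Sym2.ind with | _ a b => ?_
  induction z' using Sym2.ind with | _ c d => ?_
  simp only [Set.mem_ofPred_eq, Sym2.mem_iff, forall_eq_or_imp, forall_eq] at hz hz'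
  simp only [Sym2.map_mk, Sym2.eq_iff] at h ⊢
  rcases h with ⟨hac, hbd⟩ | ⟨had, hbc⟩
  · exact Or.inl ⟨hf hz.1 hz'.1 hac, hf hz.2 hz'.2 hbd⟩
  · exact Or.inr ⟨hf hz.1 hz'.2 had, hf hz.2 hz'.1 hbc⟩

section FGraphCopies

variable {r : ℕ} {F : SimpleGraph (Fin r)} {V W : Type*}

lemma FEdge.IsCopyOf.mem_of_mem_edge {h : FEdge V} (hc : h.IsCopyOf F) {e : Sym2 V}
    (he : e ∈ h.2) {x : V} (hx : x ∈ e) : x ∈ h.1 := by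
  obtain ⟨φ, -, hverts, hedges⟩ := hc
  obtain ⟨e₀, -, rfl⟩ : e ∈ Sym2.map φ '' F.edgeSet := hedges ▸ he
  obtain ⟨y, -, rfl⟩ := Sym2.mem_map.1 hx
  exact (Finset.mem_coe.1 (hverts ▸ Set.mem_range_self y : φ y ∈ (↑h.1 : Set V)))

variable [DecidableEq W]

lemma FEdge.map_congr {h : FEdge V} (hc : h.IsCopyOf F) {ψ ψ' : V → W}
    (hψ : Set.EqOn ψ ψ' h.1) : h.map ψ = h.map ψ' :=
  Prod.ext (image_congr hψ) <| image_congr fun _ he =>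
    Sym2.map_congr fun _ hx => hψ (hc.mem_of_mem_edge he hx)

lemma FEdge.map_injOn {ψ : V → W} {s : Set V} (hψ : Set.InjOn ψ s) :
    Set.InjOn (FEdge.map ψ) {h | h.IsCopyOf F ∧ ↑h.1 ⊆ s} := by
  rintro h ⟨hc, hs⟩ h' ⟨hc', hs'⟩ hmap
  have hedges : ∀ {g : FEdge V}, g.IsCopyOf F → ↑g.1 ⊆ s →
      (↑g.2 : Set (Sym2 V)) ⊆ {z | ∀ x ∈ z, x ∈ s} :=
    fun hg hgs _ he _ hx => hgs (hg.mem_of_mem_edge he hx)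
  have h1 := congrArg (fun g : FEdge W => (↑g.1 : Set W)) hmap
  have h2 := congrArg (fun g : FEdge W => (↑g.2 : Set (Sym2 W))) hmap
  simp only [FEdge.map, coe_image] at h1 h2
  exact Prod.ext (coe_injective ((hψ.image_eq_image_iff hs hs').1 h1)) <| coe_injective <|
    ((Sym2.map_injOn hψ).image_eq_image_iff (hedges hc hs) (hedges hc' hs')).1 h2

variable [DecidableEq V]

lemma FGraph.map_congr {A : FGraph V} (hA : A.Wf F) {ψ ψ' : V → W}
    (hψ : Set.EqOn ψ ψ' A.1) : A.map ψ = A.map ψ' :=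
  Prod.ext (image_congr hψ) <| image_congr fun h hh =>
    FEdge.map_congr (hA h hh).1 (hψ.mono (coe_subset.2 (hA h hh).2))

lemma FGraph.IsoTo.card_snd {A : FGraph V} (hA : A.Wf F) {K : FGraph W} (hK : A.IsoTo K) :
    K.2.card = A.2.card := by
  obtain ⟨ψ, hψ, rfl⟩ := hK
  have hA' : ∀ h ∈ A.2, h.IsCopyOf F ∧ ↑h.1 ⊆ (↑A.1 : Set V) :=
    fun h hh => ⟨(hA h hh).1, coe_subset.2 (hA h hh).2⟩
  exact card_image_of_injOn fun h hh h' hh' => FEdge.map_injOn hψ (hA' h hh) (hA' h' hh')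

/-- A copy of `A` is determined by where the vertices of `A` go. -/
lemma card_filter_isoTo_le [Fintype W] {A : FGraph V} (hA : A.Wf F) :
    #{K : FGraph W | A.IsoTo K} ≤ Fintype.card W ^ A.1.card := by
  choose ψ hψ using fun K : {K : FGraph W // A.IsoTo K} => K.2
  rw [← Fintype.card_subtype, ← Fintype.card_coe A.1, ← Fintype.card_fun]
  refine Fintype.card_le_of_injective (fun K x => ψ K x) fun K L hKL => Subtype.ext ?_
  rw [← (hψ K).2, ← (hψ L).2]
  exact FGraph.map_congr hA fun x hx => congrFun hKL ⟨x, hx⟩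

end FGraphCopies

lemma hfProb_exists_isoTo_le {r n : ℕ} {F : SimpleGraph (Fin r)} {V : Type*} [DecidableEq V]
    {A : FGraph V} (hA : A.Wf F) {p : ℝ} (hp0 : 0 ≤ p) (hp1 : p ≤ 1) :
    hfProb r n F p (fun S => ∃ K : FGraph (Fin n), K.2 ⊆ S ∧ A.IsoTo K) ≤
      (n : ℝ) ^ A.1.card * p ^ A.2.card :=
  calc hfProb r n F p (fun S => ∃ K : FGraph (Fin n), K.2 ⊆ S ∧ A.IsoTo K)
      ≤ ∑ K ∈ univ.filter (A.IsoTo ·), p ^ K.2.card :=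
        sum_subsetWeight_ite_le_sum_pow hp0 hp1 _ _ Prod.snd fun _ _ ⟨K, hKS, hK⟩ =>
          ⟨K, mem_filter.2 ⟨mem_univ K, hK⟩, hKS⟩
    _ = #{K : FGraph (Fin n) | A.IsoTo K} * p ^ A.2.card := by
        rw [sum_congr rfl fun K hK => by rw [(mem_filter.1 hK).2.card_snd hA], sum_const,
          nsmul_eq_mul]
    _ ≤ (n : ℝ) ^ A.1.card * p ^ A.2.card := by
        gcongr
        exact_mod_cast (card_filter_isoTo_le (W := Fin n) hA).trans_eq
          (by rw [Fintype.card_fin])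

lemma autCard_pos {r : ℕ} (F : SimpleGraph (Fin r)) : 0 < autCard F :=
  have : Finite (F ≃g F) := Finite.of_injective _ RelIso.toEquiv_injective
  have : Nonempty (F ≃g F) := ⟨RelIso.refl _⟩
  Nat.card_pos

lemma autCard_le_factorial {r : ℕ} (F : SimpleGraph (Fin r)) : autCard F ≤ r.factorial :=
  (Nat.card_le_card_of_injective _ RelIso.toEquiv_injective).trans_eq
    (by simp [Fintype.card_perm])

lemma one_le_factorial_div_autCard {r : ℕ} (F : SimpleGraph (Fin r)) :
    1 ≤ (r.factorial : ℝ) / autCard F := by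
  rw [one_le_div (by exact_mod_cast autCard_pos F)]
  exact_mod_cast autCard_le_factorial F

lemma compCount_eq_one {V : Type*} [DecidableEq V] {H : FGraph V} (hH : FGraphConnected H) :
    compCount H = 1 :=
  Nat.card_eq_one_iff_unique.2 ⟨hH.preconnected.subsingleton_connectedComponent,
    hH.nonempty.map (SimpleGraph.connectedComponentMk _)⟩

lemma nullity_le_of_connected (r : ℕ) {V : Type*} [DecidableEq V] {H : FGraph V}
    (hH : FGraphConnected H) :
    nullity r H ≤ ((r - 1 : ℕ) : ℤ) * H.2.card + 1 - H.1.card := by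
  have hr : (r : ℤ) - 1 ≤ ((r - 1 : ℕ) : ℤ) := by omega
  rw [nullity, compCount_eq_one hH, Nat.cast_one]
  gcongr

lemma pow_div_le_choose_pred {k n : ℕ} (h : 2 * k ≤ n) :
    (n : ℝ) ^ k / (2 ^ k * k.factorial) ≤ (n - 1).choose k := by
  have hbase : (n : ℝ) / 2 ≤ ((n - 1 + 1 - k : ℕ) : ℝ) := by
    have hcast : ((n - k : ℕ) : ℝ) = n - k := Nat.cast_sub (by omega)
    have hle : ((n - k : ℕ) : ℝ) ≤ ((n - 1 + 1 - k : ℕ) : ℝ) := Nat.cast_le.2 (by omega)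
    have h2 : (2 * k : ℝ) ≤ n := by exact_mod_cast h
    linarith
  calc (n : ℝ) ^ k / (2 ^ k * k.factorial) = ((n : ℝ) / 2) ^ k / k.factorial := by
        rw [div_pow, div_div]
    _ ≤ ((n - 1 + 1 - k : ℕ) : ℝ) ^ k / k.factorial := by gcongr
    _ ≤ (n - 1).choose k := Nat.pow_le_choose k (n - 1)

lemma eventually_le_mul_rpow_of_le_div_choose {π : ℕ → ℝ} {ε c : ℝ} {k : ℕ}
    (hc : 1 ≤ c) (hπ : ∀ n : ℕ, π n ≤ (n : ℝ) ^ ε / (c * (n - 1).choose k)) :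
    ∀ᶠ n : ℕ in atTop, π n ≤ (2 ^ k * k.factorial) * (n : ℝ) ^ (ε - k) := by
  filter_upwards [eventually_ge_atTop (2 * k + 1)] with n hn
  have hn0 : (0 : ℝ) < n := by exact_mod_cast (by omega : 0 < n)
  calc π n ≤ (n : ℝ) ^ ε / (c * (n - 1).choose k) := hπ n
    _ ≤ (n : ℝ) ^ ε / ((n : ℝ) ^ k / (2 ^ k * k.factorial)) := by
        refine div_le_div_of_nonneg_left (by positivity) (by positivity) ?_
        exact (pow_div_le_choose_pred (by omega)).trans
          (le_mul_of_one_le_left (by positivity) hc)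
    _ = (2 ^ k * k.factorial) * (n : ℝ) ^ (ε - k) := by
        rw [Real.rpow_sub hn0, Real.rpow_natCast]
        field_simp

lemma tendsto_pow_mul_mul_rpow_pow_nhds_zero {v e : ℕ} {b : ℝ} (D : ℝ) (h : v + b * e < 0) :
    Tendsto (fun n : ℕ => (n : ℝ) ^ v * (D * (n : ℝ) ^ b) ^ e) atTop (𝓝 0) := by
  have hlim : Tendsto (fun n : ℕ => D ^ e * (n : ℝ) ^ ((v : ℝ) + b * e)) atTop (𝓝 0) := by
    simpa using ((tendsto_rpow_neg_atTop (neg_pos.2 h)).comp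
      tendsto_natCast_atTop_atTop).const_mul (D ^ e)
  refine hlim.congr' ?_
  filter_upwards [eventually_gt_atTop 0] with n hn
  have hn : (0 : ℝ) < n := by exact_mod_cast hn
  rw [mul_pow, Real.rpow_add hn, Real.rpow_natCast, Real.rpow_mul hn.le, Real.rpow_natCast]
  ring

theorem no_avoidable_configuration_general {r : ℕ} (F : SimpleGraph (Fin r))
    (A : FGraph ℕ) (hA : Avoidable F A)
    (ε : ℝ) (hεA : ε < ((nullity r A : ℝ) - 1) / (A.2.card : ℝ))
    (π : ℕ → ℝ) (hπ0 : ∀ n, 0 ≤ π n)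
    (hπ : ∀ n : ℕ, π n ≤ (n : ℝ) ^ ε /
      (((r.factorial : ℝ) / (autCard F : ℝ)) * ((n - 1).choose (r - 1) : ℝ))) :
    Filter.Tendsto
      (fun n : ℕ => hfProb r n F (π n)
        fun S => ∃ K : FGraph (Fin n), K.2 ⊆ S ∧ FGraph.IsoTo A K)
      Filter.atTop (nhds 0) := by
  obtain ⟨hwf, hconn, hnull⟩ := hA
  have hN := nullity_le_of_connected r hconn
  have he : (0 : ℝ) < A.2.card := by
    have : A.2.card ≠ 0 := fun h0 => by rw [h0] at hN; omega
    positivity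
  have hexp : (A.1.card : ℝ) + (ε - (r - 1 : ℕ)) * A.2.card < 0 := by
    have hN' : (nullity r A : ℝ) ≤ ((r - 1 : ℕ) : ℝ) * A.2.card + 1 - A.1.card := by
      exact_mod_cast hN
    linarith [(lt_div_iff₀ he).1 hεA]
  have hπ_decay : ((0 : ℕ) : ℝ) + (ε - (r - 1 : ℕ)) * ((1 : ℕ) : ℝ) < 0 := by
    push_cast
    nlinarith [(A.1.card.cast_nonneg : (0 : ℝ) ≤ A.1.card)]
  set D : ℝ := 2 ^ (r - 1) * (r - 1).factorial
  have hπle := eventually_le_mul_rpow_of_le_div_choose (one_le_factorial_div_autCard F) hπ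
  have hπ1 : ∀ᶠ n in atTop, π n ≤ 1 := by
    have hlim := tendsto_pow_mul_mul_rpow_pow_nhds_zero D hπ_decay
    simp only [pow_zero, pow_one, one_mul] at hlim
    filter_upwards [hπle, hlim.eventually (eventually_le_nhds one_pos)] with n h h'
      using h.trans h'
  refine squeeze_zero' ?_ ?_ (tendsto_pow_mul_mul_rpow_pow_nhds_zero D hexp)
  · filter_upwards [hπ1] with n h1 using hfProb_nonneg F (hπ0 n) h1 _
  · filter_upwards [hπle, hπ1] with n hle h1
    exact (hfProb_exists_isoTo_le hwf (hπ0 n) h1).trans (by gcongr; exact hπ0 n)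

/-- For a fixed avoidable configuration `A` and constant
`0 < ε < (n(A)-1)/e(A)`, whp `H_F(n,π)` contains no copy of `A`. -/
theorem no_avoidable_configuration {r : ℕ} (hr : 3 ≤ r) (F : SimpleGraph (Fin r))
    (hFconn : F.Connected) (A : FGraph ℕ) (hA : Avoidable F A)
    (ε : ℝ) (hε0 : 0 < ε) (hεA : ε < ((nullity r A : ℝ) - 1) / (A.2.card : ℝ))
    (π : ℕ → ℝ) (hπ0 : ∀ n, 0 ≤ π n)
    (hπ : ∀ n : ℕ, π n ≤ (n : ℝ) ^ ε /
      (((r.factorial : ℝ) / (autCard F : ℝ)) * ((n - 1).choose (r - 1) : ℝ))) :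
    Filter.Tendsto
      (fun n : ℕ => hfProb r n F (π n)
        fun S => ∃ K : FGraph (Fin n), K.2 ⊆ S ∧ FGraph.IsoTo A K)
      Filter.atTop (nhds 0) :=
  no_avoidable_configuration_general F A hA ε hεA π hπ0 hπ

end
end

section
/- Let F be a strictly 1-balanced graph on r ≥ 3 vertices, let C be a dense clean F-cycle of length k ≥ 2, and let S be the shadow graph of C. Then e(S) = k·e(F), v(S) = k(r−1), so e(S)/v(S) = d_1(F), and every proper subgraph S' of S with at least one edge satisfies e(S')/v(S') < e(S)/v(S); that is, S is strictly balanced. -/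
open scoped Classical
open Filter Asymptotics

noncomputable section

/-! The shadow is the union of the `k` copies of `F` forming the cycle. Their edge sets are
pairwise disjoint (two copies share at most one vertex, or, for `k = 2`, two vertices that do
not span a common edge), every vertex lies in at most two copies and exactly `k` vertices are
shared, whence `e(S) = k e(F)` and `v(S) = k r - k`.

For a subgraph `(W, E')` let `I` be the set of copies meeting `E'`. Strict 1-balancedness of `F`
bounds the part of `E'` inside copy `i` by `d₁(F) (|W ∩ V(hᵢ)| - 1)`, and
`∑_{i ∈ I} (|W ∩ V(hᵢ)| - 1) ≤ |W|` because the copies in `I` share at most `|I|` vertices, and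
fewer than `|I|` when `I` is a proper subfamily. Equality throughout forces every copy to be
entirely present, i.e. `(W, E') = S`. -/

open Finset Function

namespace FEdge.IsCopyOf

variable {r : ℕ} {V : Type*} {F : SimpleGraph (Fin r)} {h : FEdge V}

theorem card_fst (hc : h.IsCopyOf F) : #h.1 = r := by
  obtain ⟨φ, hφ, hV, -⟩ := hc
  rw [← Set.ncard_coe_finset, hV, ← Set.image_univ, Set.ncard_image_of_injective _ hφ,
    Set.ncard_univ, Nat.card_eq_fintype_card, Fintype.card_fin]

theorem card_snd (hc : h.IsCopyOf F) : #h.2 = edgeCnt F := by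
  obtain ⟨φ, hφ, -, hE⟩ := hc
  rw [← Set.ncard_coe_finset, hE, Set.ncard_image_of_injective _ (Sym2.map.injective hφ)]
  rfl

theorem mem_fst_of_mem_snd (hc : h.IsCopyOf F) {e : Sym2 V} (he : e ∈ h.2) {x : V}
    (hx : x ∈ e) : x ∈ h.1 := by
  obtain ⟨φ, -, hV, hE⟩ := hc
  obtain ⟨e₀, -, rfl⟩ : e ∈ Sym2.map φ '' F.edgeSet := hE ▸ he
  obtain ⟨y, -, rfl⟩ := Sym2.mem_map.mp hx
  rw [← mem_coe, hV]
  exact Set.mem_range_self y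

theorem ne_of_mk_mem_snd (hc : h.IsCopyOf F) {x y : V} (he : s(x, y) ∈ h.2) : x ≠ y := by
  obtain ⟨φ, hφ, -, hE⟩ := hc
  obtain ⟨e₀, he₀, he⟩ : s(x, y) ∈ Sym2.map φ '' F.edgeSet := hE ▸ he
  have hdiag := (Sym2.isDiag_map hφ).not.mpr (F.not_isDiag_of_mem_edgeSet he₀)
  rwa [he, Sym2.mk_isDiag_iff] at hdiag

theorem two_le_card {W : Finset V} {E : Finset (Sym2 V)} (hc : h.IsCopyOf F) (hE : E ⊆ h.2)
    (hend : ∀ e ∈ E, ∀ x ∈ e, x ∈ W) (hne : E.Nonempty) : 2 ≤ #W := by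
  obtain ⟨e, he⟩ := hne
  induction e with
  | _ x y =>
    rw [← card_pair (hc.ne_of_mk_mem_snd (hE he))]
    exact card_le_card (insert_subset (hend _ he x (Sym2.mem_mk_left x y))
      (singleton_subset_iff.mpr (hend _ he y (Sym2.mem_mk_right x y))))

theorem d1_pos (hc : h.IsCopyOf F) (hne : h.2.Nonempty) : 0 < d1 F := by
  have hr : (2 : ℝ) ≤ r := by
    exact_mod_cast hc.card_fst ▸ hc.two_le_card subset_rfl (fun _ he _ hx =>
      hc.mem_fst_of_mem_snd he hx) hne
  have he : (0 : ℝ) < edgeCnt F := by exact_mod_cast hc.card_snd ▸ hne.card_pos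
  exact div_pos he (by linarith)

theorem card_lt_d1_mul (hF : Strictly1Balanced F) (hc : h.IsCopyOf F) {W : Finset V}
    {E : Finset (Sym2 V)} (hW : W ⊆ h.1) (hE : E ⊆ h.2) (hend : ∀ e ∈ E, ∀ x ∈ e, x ∈ W)
    (hne : E.Nonempty) (hproper : ¬(W = h.1 ∧ E = h.2)) :
    (#E : ℝ) < d1 F * (#W - 1) := by
  have hW2 : (2 : ℝ) ≤ #W := by exact_mod_cast hc.two_le_card hE hend hne
  obtain ⟨φ, hφ, hV, hEφ⟩ := hc
  let S : F.Subgraph :=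
    { verts := φ ⁻¹' W
      Adj := fun u v => F.Adj u v ∧ s(φ u, φ v) ∈ E
      adj_sub := And.left
      edge_vert := fun hadj => hend _ hadj.2 _ (Sym2.mem_mk_left _ _)
      symm := ⟨fun _ _ hadj => ⟨hadj.1.symm, Sym2.eq_swap ▸ hadj.2⟩⟩ }
  have hverts : S.verts.ncard = #W := by
    rw [← Set.ncard_image_of_injective _ hφ,
      Set.image_preimage_eq_of_subset (hV ▸ coe_subset.mpr hW), Set.ncard_coe_finset]
  have hedges : Sym2.map φ '' S.edgeSet = E := by
    ext e
    constructor
    · rintro ⟨e₀, he₀, rfl⟩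
      induction e₀ with
      | _ u v => exact he₀.2
    · intro he
      obtain ⟨e₀, he₀, rfl⟩ : e ∈ Sym2.map φ '' F.edgeSet := hEφ ▸ hE he
      induction e₀ with
      | _ u v => exact ⟨s(u, v), ⟨he₀, he⟩, rfl⟩
  have hncard : S.edgeSet.ncard = #E := by
    rw [← Set.ncard_image_of_injective _ (Sym2.map.injective hφ), hedges, Set.ncard_coe_finset]
  have hS : S ≠ ⊤ := by
    refine fun htop => hproper ⟨hW.antisymm fun x hx => ?_, hE.antisymm fun e he => ?_⟩
    · obtain ⟨u, rfl⟩ : x ∈ Set.range φ := hV ▸ hx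
      exact (htop ▸ Set.mem_univ u : u ∈ S.verts)
    · obtain ⟨e₀, he₀, rfl⟩ : e ∈ Sym2.map φ '' F.edgeSet := hEφ ▸ he
      rw [← SimpleGraph.Subgraph.edgeSet_top, ← htop] at he₀
      exact mem_coe.mp (hedges ▸ Set.mem_image_of_mem _ he₀)
  have hlt := hF S hS (by rw [hverts]; exact_mod_cast hW2)
    (by rw [hncard]; exact hne.card_pos)
  rw [hverts, hncard] at hlt
  exact (div_lt_iff₀ (by linarith)).mp hlt

theorem card_le_d1_mul (hF : Strictly1Balanced F) (hc : h.IsCopyOf F) {W : Finset V}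
    {E : Finset (Sym2 V)} (hW : W ⊆ h.1) (hE : E ⊆ h.2) (hend : ∀ e ∈ E, ∀ x ∈ e, x ∈ W)
    (hne : E.Nonempty) : (#E : ℝ) ≤ d1 F * (#W - 1) := by
  by_cases hfull : W = h.1 ∧ E = h.2
  · obtain ⟨rfl, rfl⟩ := hfull
    have hr : (2 : ℝ) ≤ r := by exact_mod_cast hc.card_fst ▸ hc.two_le_card hE hend hne
    rw [hc.card_fst, hc.card_snd, d1, div_mul_cancel₀ _ (by linarith)]
  · exact (hc.card_lt_d1_mul hF hW hE hend hne hfull).le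

theorem exists_mk_mem_of_not_disjoint [DecidableEq V] {h' : FEdge V} (hc : h.IsCopyOf F)
    (hc' : h'.IsCopyOf F) (hnd : ¬Disjoint h.2 h'.2) :
    ∃ x y, x ≠ y ∧ x ∈ h.1 ∩ h'.1 ∧ y ∈ h.1 ∩ h'.1 ∧ s(x, y) ∈ h.2 ∧ s(x, y) ∈ h'.2 := by
  obtain ⟨e, he, he'⟩ := not_disjoint_iff.mp hnd
  induction e with
  | _ x y =>
    exact ⟨x, y, hc.ne_of_mk_mem_snd he,
      mem_inter.mpr ⟨hc.mem_fst_of_mem_snd he (Sym2.mem_mk_left x y),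
        hc'.mem_fst_of_mem_snd he' (Sym2.mem_mk_left x y)⟩,
      mem_inter.mpr ⟨hc.mem_fst_of_mem_snd he (Sym2.mem_mk_right x y),
        hc'.mem_fst_of_mem_snd he' (Sym2.mem_mk_right x y)⟩, he, he'⟩

theorem disjoint_snd_of_card_inter_le_one [DecidableEq V] {h' : FEdge V} (hc : h.IsCopyOf F)
    (hc' : h'.IsCopyOf F) (hcard : #(h.1 ∩ h'.1) ≤ 1) : Disjoint h.2 h'.2 := by
  by_contra hnd
  obtain ⟨x, y, hxy, hx, hy, -⟩ := hc.exists_mk_mem_of_not_disjoint hc' hnd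
  exact hxy (card_le_one.mp hcard x hx y hy)

end FEdge.IsCopyOf

section DoubleCounting

variable {α ι : Type*}

theorem sum_le_card_add_card_filter_two_le {s : Finset α} {f : α → ℕ}
    (hf : ∀ x ∈ s, f x ≤ 2) : ∑ x ∈ s, f x ≤ #s + #{x ∈ s | 2 ≤ f x} := by
  rw [card_filter, card_eq_sum_ones, ← sum_add_distrib]
  exact sum_le_sum fun x hx => by have := hf x hx; split_ifs <;> omega

theorem sum_eq_card_add_card_filter_two_le {s : Finset α} {f : α → ℕ}
    (hf : ∀ x ∈ s, 1 ≤ f x ∧ f x ≤ 2) : ∑ x ∈ s, f x = #s + #{x ∈ s | 2 ≤ f x} := by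
  rw [card_filter, card_eq_sum_ones, ← sum_add_distrib]
  exact sum_congr rfl fun x hx => by have := hf x hx; split_ifs <;> omega

theorem card_eq_sum_card_inter_of_subset_sup [Fintype ι] [DecidableEq α] {B : ι → Finset α}
    (hB : Pairwise (Disjoint on B)) {E : Finset α} (hE : E ⊆ univ.sup B) :
    #E = ∑ i ∈ {i | (E ∩ B i).Nonempty}, #(E ∩ B i) := by
  rw [sum_filter_of_ne fun i _ hi => card_ne_zero.mp hi]
  conv_lhs => rw [← inter_eq_left.mpr hE, sup_eq_biUnion, inter_biUnion]
  exact card_biUnion fun i _ j _ hij => (hB hij).mono inter_subset_right inter_subset_right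

variable [DecidableEq α]

def coverCount (A : ι → Finset α) (I : Finset ι) (x : α) : ℕ := #{i ∈ I | x ∈ A i}

theorem sum_card_inter_eq_sum_coverCount (A : ι → Finset α) (I : Finset ι) (W : Finset α) :
    ∑ i ∈ I, #(W ∩ A i) = ∑ x ∈ W, coverCount A I x := by
  simp_rw [coverCount, ← filter_mem_eq_inter, card_eq_sum_ones, sum_filter]
  exact sum_comm

end DoubleCounting

/-- The overlap pattern of the vertex sets of the `F`-edges of a dense clean cycle; it is all that
the counting argument uses. -/
structure IsCycleLike {ι α : Type*} [Fintype ι] [DecidableEq α] (A : ι → Finset α) : Prop where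
  coverCount_le_two : ∀ x, coverCount A univ x ≤ 2
  card_shared : #{x ∈ univ.sup A | 2 ≤ coverCount A univ x} = Fintype.card ι
  card_shared_lt : ∀ I : Finset ι, I.Nonempty → I ≠ univ →
    #{x ∈ univ.sup A | 2 ≤ coverCount A I x} < #I

namespace IsCycleLike

variable {ι α : Type*} [Fintype ι] [DecidableEq α] {A : ι → Finset α}

theorem card_shared_le (hA : IsCycleLike A) (I : Finset ι) :
    #{x ∈ univ.sup A | 2 ≤ coverCount A I x} ≤ #I := by
  rcases I.eq_empty_or_nonempty with rfl | hI
  · simp [coverCount]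
  by_cases hIu : I = univ
  · rw [hIu, hA.card_shared, card_univ]
  · exact (hA.card_shared_lt I hI hIu).le

theorem sum_card_inter_le (hA : IsCycleLike A) {W : Finset α} (hW : W ⊆ univ.sup A)
    (I : Finset ι) :
    ∑ i ∈ I, #(W ∩ A i) ≤ #W + #{x ∈ univ.sup A | 2 ≤ coverCount A I x} := by
  rw [sum_card_inter_eq_sum_coverCount]
  refine (sum_le_card_add_card_filter_two_le fun x _ => ?_).trans
    (Nat.add_le_add_left (card_le_card (filter_subset_filter _ hW)) _)
  exact (card_le_card (filter_subset_filter _ (subset_univ I))).trans (hA.coverCount_le_two x)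

theorem sum_card_inter_sub_one_le (hA : IsCycleLike A) {W : Finset α} (hW : W ⊆ univ.sup A)
    (I : Finset ι) : ∑ i ∈ I, ((#(W ∩ A i) : ℝ) - 1) ≤ #W := by
  have := (hA.sum_card_inter_le hW I).trans (Nat.add_le_add_left (hA.card_shared_le I) _)
  rw [sum_sub_distrib, sum_const, nsmul_one, ← Nat.cast_sum]
  linarith [(Nat.cast_le (α := ℝ)).mpr this, Nat.cast_add (R := ℝ) #W #I]

theorem sum_card_inter_sub_one_lt (hA : IsCycleLike A) {W : Finset α} (hW : W ⊆ univ.sup A)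
    {I : Finset ι} (hI : I.Nonempty) (hIu : I ≠ univ) :
    ∑ i ∈ I, ((#(W ∩ A i) : ℝ) - 1) < #W := by
  have := (hA.sum_card_inter_le hW I).trans_lt
    (Nat.add_lt_add_left (hA.card_shared_lt I hI hIu) _)
  rw [sum_sub_distrib, sum_const, nsmul_one, ← Nat.cast_sum]
  linarith [(Nat.cast_lt (α := ℝ)).mpr this, Nat.cast_add (R := ℝ) #W #I]

theorem sum_card_eq (hA : IsCycleLike A) : ∑ i, #(A i) = #(univ.sup A) + Fintype.card ι := by
  have hA' : ∀ i, #(A i) = #(univ.sup A ∩ A i) := fun i =>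
    congrArg card (inter_eq_right.mpr (le_sup (mem_univ i))).symm
  simp_rw [hA', sum_card_inter_eq_sum_coverCount, ← hA.card_shared]
  refine sum_eq_card_add_card_filter_two_le fun x hx => ⟨?_, hA.coverCount_le_two x⟩
  obtain ⟨i, -, hi⟩ := mem_sup.mp hx
  exact card_pos.mpr ⟨i, mem_filter.mpr ⟨mem_univ i, hi⟩⟩

end IsCycleLike

section FamilyOfCopies

variable {r : ℕ} {F : SimpleGraph (Fin r)} {ι V : Type*} [Fintype ι] [DecidableEq V]
  {h : ι → FEdge V}

theorem card_sup_snd (hc : ∀ i, (h i).IsCopyOf F)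
    (hdisj : Pairwise (Disjoint on fun i => (h i).2)) :
    #(univ.sup fun i => (h i).2) = Fintype.card ι * edgeCnt F := by
  rw [sup_eq_biUnion, card_biUnion fun i _ j _ hij => hdisj hij]
  simp [(hc _).card_snd]

theorem card_sup_fst_add (hc : ∀ i, (h i).IsCopyOf F) (hA : IsCycleLike fun i => (h i).1) :
    #(univ.sup fun i => (h i).1) + Fintype.card ι = Fintype.card ι * r := by
  rw [← hA.sum_card_eq]
  simp [(hc _).card_fst]

theorem card_lt_d1_mul_of_isCycleLike (hF : Strictly1Balanced F) (hc : ∀ i, (h i).IsCopyOf F)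
    (hdisj : Pairwise (Disjoint on fun i => (h i).2)) (hA : IsCycleLike fun i => (h i).1)
    {W : Finset V} {E : Finset (Sym2 V)} (hW : W ⊆ univ.sup fun i => (h i).1)
    (hE : E ⊆ univ.sup fun i => (h i).2) (hend : ∀ e ∈ E, ∀ x ∈ e, x ∈ W)
    (hproper : ¬(W = (univ.sup fun i => (h i).1) ∧ E = univ.sup fun i => (h i).2))
    (hne : E.Nonempty) : (#E : ℝ) < d1 F * #W := by
  set I : Finset ι := {i | (E ∩ (h i).2).Nonempty}
  have hend' : ∀ i, ∀ e ∈ E ∩ (h i).2, ∀ x ∈ e, x ∈ W ∩ (h i).1 := fun i e he x hx =>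
    mem_inter.mpr ⟨hend e (mem_inter.mp he).1 x hx,
      (hc i).mem_fst_of_mem_snd (mem_inter.mp he).2 hx⟩
  have hle : ∀ i ∈ I, (#(E ∩ (h i).2) : ℝ) ≤ d1 F * (#(W ∩ (h i).1) - 1) := fun i hi =>
    (hc i).card_le_d1_mul hF inter_subset_right inter_subset_right (hend' i)
      (mem_filter.mp hi).2
  have hEI : (#E : ℝ) = ∑ i ∈ I, (#(E ∩ (h i).2) : ℝ) := by
    exact_mod_cast card_eq_sum_card_inter_of_subset_sup hdisj hE
  obtain ⟨i₀, hi₀⟩ : I.Nonempty := by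
    obtain ⟨e, he⟩ := hne
    obtain ⟨i, -, hi⟩ := mem_sup.mp (hE he)
    exact ⟨i, mem_filter.mpr ⟨mem_univ i, e, mem_inter.mpr ⟨he, hi⟩⟩⟩
  have hd1 : 0 < d1 F := (hc i₀).d1_pos ((mem_filter.mp hi₀).2.mono inter_subset_right)
  by_cases hIu : I = univ
  · obtain ⟨i₁, hi₁⟩ : ∃ i, ¬(W ∩ (h i).1 = (h i).1 ∧ E ∩ (h i).2 = (h i).2) := by
      by_contra! hfull
      exact hproper ⟨hW.antisymm (Finset.sup_le fun i _ => (hfull i).1 ▸ inter_subset_left),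
        hE.antisymm (Finset.sup_le fun i _ => (hfull i).2 ▸ inter_subset_left)⟩
    have hi₁I : i₁ ∈ I := hIu ▸ mem_univ i₁
    calc (#E : ℝ) < ∑ i ∈ I, d1 F * ((#(W ∩ (h i).1) : ℝ) - 1) :=
          hEI ▸ sum_lt_sum hle ⟨i₁, hi₁I, (hc i₁).card_lt_d1_mul hF inter_subset_right
            inter_subset_right (hend' i₁) (mem_filter.mp hi₁I).2 hi₁⟩
      _ ≤ d1 F * #W := by
        rw [← mul_sum]
        exact mul_le_mul_of_nonneg_left (hA.sum_card_inter_sub_one_le hW I) hd1.le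
  · calc (#E : ℝ) ≤ ∑ i ∈ I, d1 F * ((#(W ∩ (h i).1) : ℝ) - 1) := hEI ▸ sum_le_sum hle
      _ < d1 F * #W := by
        rw [← mul_sum]
        exact mul_lt_mul_of_pos_left (hA.sum_card_inter_sub_one_lt hW ⟨i₀, hi₀⟩ hIu) hd1

theorem shadow_density_of_isCycleLike [Nonempty ι] (hF : Strictly1Balanced F) {C : FGraph V}
    (hwf : C.Wf F) (hV : C.1 = C.2.sup Prod.fst) (hC : C.2 = univ.image h)
    (hdisj : Pairwise (Disjoint on fun i => (h i).2)) (hA : IsCycleLike fun i => (h i).1) :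
    (shadowEdges C).card = Fintype.card ι * edgeCnt F ∧
    C.1.card = Fintype.card ι * (r - 1) ∧
    ((shadowEdges C).card : ℝ) / (C.1.card : ℝ) = d1 F ∧
    (∀ (W : Finset V) (E' : Finset (Sym2 V)), W ⊆ C.1 → E' ⊆ shadowEdges C →
      (∀ e ∈ E', ∀ x ∈ e, x ∈ W) → ¬(W = C.1 ∧ E' = shadowEdges C) → 1 ≤ E'.card →
      (E'.card : ℝ) / (W.card : ℝ) < ((shadowEdges C).card : ℝ) / (C.1.card : ℝ)) := by
  have hc : ∀ i, (h i).IsCopyOf F := fun i => (hwf _ (hC ▸ mem_image_of_mem h (mem_univ i))).1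
  rw [hV, hC, sup_image, shadowEdges, hC, sup_image]
  simp only [comp_def]
  have hcardV := card_sup_fst_add hc hA
  have hr : 1 ≤ r := Nat.pos_of_ne_zero fun hr0 => by
    simp [hr0] at hcardV
  have hcardV' : #(univ.sup fun i => (h i).1) = Fintype.card ι * (r - 1) := by
    rw [Nat.mul_sub_one]
    exact Nat.eq_sub_of_add_eq hcardV
  have hratio : (#(univ.sup fun i => (h i).2) : ℝ) / #(univ.sup fun i => (h i).1) = d1 F := by
    rw [card_sup_snd hc hdisj, hcardV', d1]
    push_cast [Nat.cast_sub hr]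
    exact mul_div_mul_left _ _ (Nat.cast_ne_zero.mpr Fintype.card_ne_zero)
  refine ⟨card_sup_snd hc hdisj, hcardV', hratio, fun W E hW hE hend hproper hne => ?_⟩
  obtain ⟨e, he⟩ := card_pos.mp hne
  have hW0 : (0 : ℝ) < #W := by exact_mod_cast card_pos.mpr ⟨_, hend e he _ (Sym2.out_fst_mem e)⟩
  rw [hratio, div_lt_iff₀ hW0]
  exact card_lt_d1_mul_of_isCycleLike hF hc hdisj hA hW hE hend hproper ⟨e, he⟩

end FamilyOfCopies

theorem isCycleLike_pair {α : Type*} [DecidableEq α] {B₁ B₂ : Finset α}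
    (h : #(B₁ ∩ B₂) = 2) : IsCycleLike ![B₁, B₂] where
  coverCount_le_two x := (card_filter_le _ _).trans (by simp)
  card_shared := by
    have hcount : ∀ x, coverCount ![B₁, B₂] univ x =
        (if x ∈ B₁ then 1 else 0) + (if x ∈ B₂ then 1 else 0) := fun x => by
      rw [coverCount, card_filter, Fin.sum_univ_two]
      rfl
    have hshared : {x ∈ univ.sup ![B₁, B₂] | 2 ≤ coverCount ![B₁, B₂] univ x} = B₁ ∩ B₂ := by
      ext x
      simp only [mem_filter, mem_inter, hcount]
      constructor
      · intro hx
        split_ifs at hx <;> simp_all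
      · intro hx
        refine ⟨mem_sup.mpr ⟨0, mem_univ _, hx.1⟩, ?_⟩
        simp [hx.1, hx.2]
    rw [hshared, h, Fintype.card_fin]
  card_shared_lt I hI hIu := by
    have hI1 : #I ≤ 1 := by
      have := (card_lt_iff_ne_univ I).mpr hIu
      rw [Fintype.card_fin] at this
      omega
    refine (card_eq_zero.mpr (filter_false_of_mem fun x _ => ?_)).trans_lt hI.card_pos
    exact ((card_filter_le I _).trans hI1).not_gt

section Cyclic

variable {α : Type*} [DecidableEq α] {k : ℕ}

theorem val_finRotate (i : Fin k) : (finRotate k i : ℕ) = (i + 1) % k := by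
  have := i.neZero
  rw [finRotate_apply, Fin.val_add, Fin.val_one', Nat.add_mod_mod]

theorem finRotate_ne_self (hk : 2 ≤ k) (i : Fin k) : finRotate k i ≠ i :=
  Equiv.Perm.mem_support.mp (support_finRotate_of_le hk ▸ mem_univ i)

theorem card_filter_finRotate_mem_lt (hk : 2 ≤ k) {I : Finset (Fin k)} (hI : I.Nonempty)
    (hIu : I ≠ univ) : #{a ∈ I | finRotate k a ∈ I} < #I := by
  refine (card_filter_le _ _).lt_of_ne fun heq => hIu ?_
  have hclosed := card_filter_eq_iff.mp heq
  obtain ⟨a, ha⟩ := hI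
  refine eq_univ_of_forall fun b => ?_
  obtain ⟨n, rfl⟩ := (isCycle_finRotate_of_le hk).exists_pow_eq
    (finRotate_ne_self hk a) (finRotate_ne_self hk b)
  induction n with
  | zero => exact ha
  | succ n ih =>
    rw [pow_succ', Equiv.Perm.mul_apply]
    exact hclosed _ ih

structure IsCyclicChain (A : Fin k → Finset α) (v : Fin k → α) : Prop where
  inter_finRotate : ∀ i, A i ∩ A (finRotate k i) = {v i}
  inter_eq_empty : ∀ i j, i ≠ j → finRotate k i ≠ j → finRotate k j ≠ i → A i ∩ A j = ∅

namespace IsCyclicChain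

variable {A : Fin k → Finset α} {v : Fin k → α}

theorem mem_left (hA : IsCyclicChain A v) (i : Fin k) : v i ∈ A i :=
  (mem_inter.mp (hA.inter_finRotate i ▸ mem_singleton_self (v i))).1

theorem mem_right (hA : IsCyclicChain A v) (i : Fin k) : v i ∈ A (finRotate k i) :=
  (mem_inter.mp (hA.inter_finRotate i ▸ mem_singleton_self (v i))).2

theorem eq_of_mem_of_mem (hA : IsCyclicChain A v) {i j : Fin k} (hij : i ≠ j) {x : α}
    (hi : x ∈ A i) (hj : x ∈ A j) :
    (finRotate k i = j ∧ x = v i) ∨ (finRotate k j = i ∧ x = v j) := by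
  by_cases h₁ : finRotate k i = j
  · subst h₁
    exact .inl ⟨rfl, mem_singleton.mp (hA.inter_finRotate i ▸ mem_inter.mpr ⟨hi, hj⟩)⟩
  by_cases h₂ : finRotate k j = i
  · subst h₂
    exact .inr ⟨rfl, mem_singleton.mp (hA.inter_finRotate j ▸ mem_inter.mpr ⟨hj, hi⟩)⟩
  exact absurd (hA.inter_eq_empty i j hij h₁ h₂ ▸ mem_inter.mpr ⟨hi, hj⟩) (notMem_empty x)

theorem card_inter_le_one (hA : IsCyclicChain A v) {i j : Fin k} (hij : i ≠ j) :
    #(A i ∩ A j) ≤ 1 := by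
  by_cases h₁ : finRotate k i = j
  · rw [← h₁, hA.inter_finRotate, card_singleton]
  by_cases h₂ : finRotate k j = i
  · rw [← h₂, inter_comm, hA.inter_finRotate, card_singleton]
  rw [hA.inter_eq_empty i j hij h₁ h₂, card_empty]
  exact zero_le_one

theorem exists_eq_of_two_le_coverCount (hA : IsCyclicChain A v) {I : Finset (Fin k)} {x : α}
    (hx : 2 ≤ coverCount A I x) : ∃ a ∈ I, finRotate k a ∈ I ∧ x = v a := by
  obtain ⟨i, hi, j, hj, hij⟩ := one_lt_card.mp hx
  rw [mem_filter] at hi hj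
  rcases hA.eq_of_mem_of_mem hij hi.2 hj.2 with ⟨rfl, rfl⟩ | ⟨rfl, rfl⟩
  exacts [⟨i, hi.1, hj.1, rfl⟩, ⟨j, hj.1, hi.1, rfl⟩]

theorem coverCount_le_two (hA : IsCyclicChain A v) (hv : Injective v) (I : Finset (Fin k))
    (x : α) : coverCount A I x ≤ 2 := by
  by_contra! hlt
  obtain ⟨a, -, -, rfl⟩ := hA.exists_eq_of_two_le_coverCount hlt.le
  refine hlt.not_ge ((card_le_card fun c hc => ?_).trans (card_insert_le a {finRotate k a}))
  by_cases hca : c = a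
  · exact hca ▸ mem_insert_self c _
  rcases hA.eq_of_mem_of_mem (Ne.symm hca) (hA.mem_left a) (mem_filter.mp hc).2 with
    ⟨rfl, -⟩ | ⟨-, hac⟩
  · exact mem_insert_of_mem (mem_singleton_self _)
  · exact absurd (hv hac).symm hca

theorem isCycleLike (hA : IsCyclicChain A v) (hk : 2 ≤ k) (hv : Injective v) :
    IsCycleLike A where
  coverCount_le_two := hA.coverCount_le_two hv univ
  card_shared := by
    have hshared : {x ∈ univ.sup A | 2 ≤ coverCount A univ x} = univ.image v := by
      ext x
      constructor
      · intro hx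
        obtain ⟨a, -, -, rfl⟩ := hA.exists_eq_of_two_le_coverCount (mem_filter.mp hx).2
        exact mem_image_of_mem v (mem_univ a)
      · intro hx
        obtain ⟨a, -, rfl⟩ := mem_image.mp hx
        refine mem_filter.mpr ⟨mem_sup.mpr ⟨a, mem_univ a, hA.mem_left a⟩, ?_⟩
        rw [← card_pair (finRotate_ne_self hk a).symm]
        exact card_le_card (insert_subset (mem_filter.mpr ⟨mem_univ a, hA.mem_left a⟩)
          (singleton_subset_iff.mpr (mem_filter.mpr ⟨mem_univ _, hA.mem_right a⟩)))
    rw [hshared, card_image_of_injective _ hv, card_univ]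
  card_shared_lt I hI hIu := calc
    _ ≤ #({a ∈ I | finRotate k a ∈ I}.image v) := card_le_card fun x hx => by
        obtain ⟨a, ha, ha', rfl⟩ := hA.exists_eq_of_two_le_coverCount (mem_filter.mp hx).2
        exact mem_image_of_mem v (mem_filter.mpr ⟨ha, ha'⟩)
    _ ≤ #{a ∈ I | finRotate k a ∈ I} := card_image_le
    _ < #I := card_filter_finRotate_mem_lt hk hI hIu

end IsCyclicChain

end Cyclic

theorem IsCleanCycleOfLen.exists_isCycleLike {r : ℕ} {F : SimpleGraph (Fin r)} {V : Type*}
    [DecidableEq V] {C : FGraph V} {k : ℕ} (hC : IsCleanCycleOfLen F C k)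
    (hdense : ¬IsSparse F C) :
    2 ≤ k ∧ ∃ h : Fin k → FEdge V, C.2 = univ.image h ∧
      Pairwise (Disjoint on fun i => (h i).2) ∧ IsCycleLike fun i => (h i).1 := by
  obtain ⟨hwf, -, ⟨rfl, h₁, h₂, hne, hC2, hcard⟩ | ⟨hk, h, -, hC2, v, hv, hcons, hnon⟩⟩ := id hC
  · have hc₁ := (hwf h₁ (hC2 ▸ mem_insert_self h₁ {h₂})).1
    have hc₂ := (hwf h₂ (hC2 ▸ mem_insert_of_mem (mem_singleton_self h₂))).1
    have hd : Disjoint h₁.2 h₂.2 := by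
      by_contra hnd
      obtain ⟨x, y, hxy, hx, hy, hx₁, hx₂⟩ := hc₁.exists_mk_mem_of_not_disjoint hc₂ hnd
      refine hdense ⟨hC, h₁, h₂, hne, hC2, x, y, hxy, ?_, hx₁, hx₂⟩
      exact (eq_of_subset_of_card_le (insert_subset hx (singleton_subset_iff.mpr hy))
        (by rw [hcard, card_pair hxy])).symm
    have hfst : (fun i => (![h₁, h₂] i).1) = ![h₁.1, h₂.1] := by
      ext i : 1
      fin_cases i <;> rfl
    refine ⟨le_rfl, ![h₁, h₂], ?_, ?_, hfst ▸ isCycleLike_pair hcard⟩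
    · rw [hC2]
      ext
      simp [Fin.exists_fin_two, eq_comm]
    · intro i j hij
      fin_cases i <;> fin_cases j <;> simp_all [onFun, hd.symm]
  · have hc : ∀ i, (h i).IsCopyOf F := fun i =>
      (hwf _ (hC2 ▸ mem_image_of_mem h (mem_univ i))).1
    have hA : IsCyclicChain (fun i => (h i).1) v :=
      ⟨fun i => hcons i _ (val_finRotate i).symm, fun i j hij h₁ h₂ => hnon i j hij
        (fun e => h₁ (Fin.ext ((val_finRotate i).trans e)))
        (fun e => h₂ (Fin.ext ((val_finRotate j).trans e)))⟩
    exact ⟨by omega, h, hC2, fun i j hij =>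
      (hc i).disjoint_snd_of_card_inter_le_one (hc j) (hA.card_inter_le_one hij),
      hA.isCycleLike (by omega) hv⟩

theorem dense_clean_cycle_strictly_balanced_general {r : ℕ} (F : SimpleGraph (Fin r))
    (hF : Strictly1Balanced F) {V : Type*} [DecidableEq V] (C : FGraph V)
    (k : ℕ) (hC : IsCleanCycleOfLen F C k) (hdense : ¬IsSparse F C) :
    (shadowEdges C).card = k * edgeCnt F ∧
    C.1.card = k * (r - 1) ∧
    ((shadowEdges C).card : ℝ) / (C.1.card : ℝ) = d1 F ∧
    (∀ (W : Finset V) (E' : Finset (Sym2 V)), W ⊆ C.1 → E' ⊆ shadowEdges C →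
      (∀ e ∈ E', ∀ x ∈ e, x ∈ W) → ¬(W = C.1 ∧ E' = shadowEdges C) → 1 ≤ E'.card →
      (E'.card : ℝ) / (W.card : ℝ) < ((shadowEdges C).card : ℝ) / (C.1.card : ℝ)) := by
  obtain ⟨hk, h, hCh, hdisj, hA⟩ := hC.exists_isCycleLike hdense
  have : Nonempty (Fin k) := ⟨⟨0, by omega⟩⟩
  simpa only [Fintype.card_fin] using
    shadow_density_of_isCycleLike hF hC.1 hC.2.1 hCh hdisj hA

/-- The shadow graph `S` of a dense clean `F`-cycle of length `k ≥ 2`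
satisfies `e(S) = k·e(F)`, `v(S) = k(r-1)`, so `e(S)/v(S) = d₁(F)`, and it is strictly
balanced: every proper subgraph with at least one edge has strictly smaller density. -/
theorem dense_clean_cycle_strictly_balanced {r : ℕ} (hr : 3 ≤ r) (F : SimpleGraph (Fin r))
    (hF : Strictly1Balanced F) {V : Type*} [DecidableEq V] (C : FGraph V)
    (k : ℕ) (hk : 2 ≤ k) (hC : IsCleanCycleOfLen F C k) (hdense : ¬IsSparse F C) :
    (shadowEdges C).card = k * edgeCnt F ∧
    C.1.card = k * (r - 1) ∧
    ((shadowEdges C).card : ℝ) / (C.1.card : ℝ) = d1 F ∧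
    (∀ (W : Finset V) (E' : Finset (Sym2 V)), W ⊆ C.1 → E' ⊆ shadowEdges C →
      (∀ e ∈ E', ∀ x ∈ e, x ∈ W) → ¬(W = C.1 ∧ E' = shadowEdges C) → 1 ≤ E'.card →
      (E'.card : ℝ) / (W.card : ℝ) < ((shadowEdges C).card : ℝ) / (C.1.card : ℝ)) :=
  dense_clean_cycle_strictly_balanced_general F hF C k hC hdense

end
end

section
/- Let E be a finite set whose elements are each present independently with probability p ∈ [0,1]. Let N be a finite index set, let (E_i)_{i∈N} be nonempty subsets of E, and let E_j ⊆ E be a further subset. For a subset E' ⊆ E write A(E') for the event that all elements of E' are present. If P(∩_{i∈N} A(E_i)^c) > 0, then P(A(E_j) | ∩_{i∈N} A(E_i)^c) ≥ P(A(E_j)) − Σ_{i∈N : E_i ∩ E_j ≠ ∅} P(A(E_i) ∩ A(E_j)) = p^{|E_j|} − Σ_{i∈N : E_i ∩ E_j ≠ ∅} p^{|E_i ∪ E_j|}. -/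
open scoped Classical
open Filter Asymptotics

noncomputable section

/-- Probability of the event `Q` when each element of the finite set `E` is present
independently with probability `p`. -/
def bernProb {E : Type*} [Fintype E] (p : ℝ) (Q : Finset E → Prop) : ℝ :=
  ∑ ω : Finset E, if Q ω then p ^ ω.card * (1 - p) ^ (Fintype.card E - ω.card) else 0

section BernHelpers

variable {E : Type*} [Fintype E] [DecidableEq E]

/-- Weight of a configuration `ω` inside ground set `S`. -/
private def bw (p : ℝ) (S ω : Finset E) : ℝ :=
  p ^ ω.card * (1 - p) ^ (S.card - ω.card)

private def bind' (Q : Finset E → Prop) (ω : Finset E) : ℝ := if Q ω then 1 else 0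

private lemma bw_nonneg {p : ℝ} (hp0 : 0 ≤ p) (hp1 : p ≤ 1) (S ω : Finset E) :
    0 ≤ bw p S ω :=
  mul_nonneg (pow_nonneg hp0 _) (pow_nonneg (by linarith) _)

private lemma bind'_nonneg (Q : Finset E → Prop) (ω : Finset E) : 0 ≤ bind' Q ω := by
  unfold bind'; split <;> norm_num

private lemma sum_bw (p : ℝ) (S : Finset E) : ∑ a ∈ S.powerset, bw p S a = 1 := by
  have h := Finset.prod_add (fun _ : E => p) (fun _ : E => 1 - p) S
  have h1 : ∏ _i ∈ S, (p + (1 - p)) = 1 := by simp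
  rw [h1] at h
  rw [show (1:ℝ) = ∑ t ∈ S.powerset, (∏ _i ∈ t, p) * ∏ _i ∈ S \ t, (1 - p) from h]
  refine Finset.sum_congr rfl fun t ht => ?_
  rw [Finset.prod_const, Finset.prod_const,
    Finset.card_sdiff_of_subset (Finset.mem_powerset.mp ht)]
  rfl

private lemma bernProb_eq (p : ℝ) (Q : Finset E → Prop) :
    bernProb p Q
      = ∑ ω ∈ (Finset.univ : Finset E).powerset, bw p Finset.univ ω * bind' Q ω := by
  rw [Finset.powerset_univ, bernProb]
  refine Finset.sum_congr rfl fun ω _ => ?_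
  simp only [bw, bind', Finset.card_univ]
  split <;> simp

private lemma split_sum (p : ℝ) {S T : Finset E} (hST : Disjoint S T)
    (X : Finset E → ℝ) :
    ∑ ω ∈ (S ∪ T).powerset, bw p (S ∪ T) ω * X ω
      = ∑ a ∈ S.powerset, ∑ b ∈ T.powerset, bw p S a * bw p T b * X (a ∪ b) := by
  rw [← Finset.sum_product']
  refine Finset.sum_nbij' (fun ω => (ω ∩ S, ω ∩ T)) (fun q => q.1 ∪ q.2)
    ?_ ?_ ?_ ?_ ?_
  · intro ω hω
    simp only [Finset.mem_product, Finset.mem_powerset]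
    exact ⟨Finset.inter_subset_right, Finset.inter_subset_right⟩
  · rintro ⟨a, b⟩ hab
    simp only [Finset.mem_product, Finset.mem_powerset] at hab ⊢
    exact Finset.union_subset_union hab.1 hab.2
  · intro ω hω
    rw [Finset.mem_powerset] at hω
    show ω ∩ S ∪ ω ∩ T = ω
    rw [← Finset.inter_union_distrib_left, Finset.inter_eq_left.mpr hω]
  · rintro ⟨a, b⟩ hab
    simp only [Finset.mem_product, Finset.mem_powerset] at hab
    have h1 : (a ∪ b) ∩ S = a := by
      ext x
      simp only [Finset.mem_inter, Finset.mem_union]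
      constructor
      · rintro ⟨h | h, hS⟩
        · exact h
        · exact absurd hS (Finset.disjoint_right.mp hST (hab.2 h))
      · intro h; exact ⟨Or.inl h, hab.1 h⟩
    have h2 : (a ∪ b) ∩ T = b := by
      ext x
      simp only [Finset.mem_inter, Finset.mem_union]
      constructor
      · rintro ⟨h | h, hT⟩
        · exact absurd hT (Finset.disjoint_left.mp hST (hab.1 h))
        · exact h
      · intro h; exact ⟨Or.inr h, hab.2 h⟩
    show ((a ∪ b) ∩ S, (a ∪ b) ∩ T) = (a, b)
    rw [h1, h2]
  · intro ω hω
    rw [Finset.mem_powerset] at hω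
    show bw p (S ∪ T) ω * X ω = bw p S (ω ∩ S) * bw p T (ω ∩ T) * X (ω ∩ S ∪ ω ∩ T)
    have hωu : ω ∩ S ∪ ω ∩ T = ω := by
      rw [← Finset.inter_union_distrib_left, Finset.inter_eq_left.mpr hω]
    have hc : ω.card = (ω ∩ S).card + (ω ∩ T).card := by
      rw [← hωu, Finset.card_union_of_disjoint]
      · rw [hωu]
      · exact hST.mono Finset.inter_subset_right Finset.inter_subset_right
    have hcu : (S ∪ T).card = S.card + T.card := Finset.card_union_of_disjoint hST
    have h1 : (ω ∩ S).card ≤ S.card := Finset.card_le_card Finset.inter_subset_right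
    have h2 : (ω ∩ T).card ≤ T.card := Finset.card_le_card Finset.inter_subset_right
    simp only [bw, hωu, hc, hcu]
    rw [show S.card + T.card - ((ω ∩ S).card + (ω ∩ T).card)
        = (S.card - (ω ∩ S).card) + (T.card - (ω ∩ T).card) from by omega,
      pow_add, pow_add]
    ring

private lemma bern_indep (p : ℝ) (A : Finset E) (R : Finset E → Prop)
    (hR : ∀ a b : Finset E, a ⊆ A → (R (a ∪ b) ↔ R b)) :
    bernProb p (fun ω => A ⊆ ω ∧ R ω) = p ^ A.card * bernProb p R := by
  have hD : Disjoint A Aᶜ := disjoint_compl_right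
  have hU : A ∪ Aᶜ = (Finset.univ : Finset E) := Finset.union_compl A
  rw [bernProb_eq, bernProb_eq, ← hU, split_sum p hD, split_sum p hD]
  have key : ∀ a ∈ A.powerset, ∀ b ∈ Aᶜ.powerset,
      (A ⊆ a ∪ b ↔ a = A) := by
    intro a ha b hb
    rw [Finset.mem_powerset] at ha hb
    constructor
    · intro h
      refine Finset.Subset.antisymm ha fun x hx => ?_
      rcases Finset.mem_union.mp (h hx) with h' | h'
      · exact h'
      · exact absurd hx (by simpa using hb h')
    · intro h; rw [h]; exact Finset.subset_union_left
  have lhs_eq : ∀ a ∈ A.powerset, ∀ b ∈ Aᶜ.powerset,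
      bw p A a * bw p Aᶜ b * bind' (fun ω => A ⊆ ω ∧ R ω) (a ∪ b)
        = if a = A then bw p A a * (bw p Aᶜ b * bind' R b) else 0 := by
    intro a ha b hb
    have ha' : a ⊆ A := Finset.mem_powerset.mp ha
    by_cases hA : a = A
    · simp only [hA, if_true, bind']
      have hiff : (A ⊆ A ∪ b ∧ R (A ∪ b)) ↔ R b := by
        rw [hR A b (le_refl A)]
        exact ⟨fun h => h.2, fun h => ⟨Finset.subset_union_left, h⟩⟩
      rw [if_congr hiff rfl rfl]
      split <;> ring
    · simp only [hA, if_false, bind']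
      rw [if_neg (fun h => hA ((key a ha b hb).mp h.1))]
      ring
  calc ∑ a ∈ A.powerset, ∑ b ∈ Aᶜ.powerset,
        bw p A a * bw p Aᶜ b * bind' (fun ω => A ⊆ ω ∧ R ω) (a ∪ b)
      = ∑ a ∈ A.powerset,
          if a = A then ∑ b ∈ Aᶜ.powerset, bw p A a * (bw p Aᶜ b * bind' R b) else 0 := by
        refine Finset.sum_congr rfl fun a ha => ?_
        rw [Finset.sum_congr rfl (fun b hb => lhs_eq a ha b hb)]
        split <;> simp
    _ = ∑ b ∈ Aᶜ.powerset, bw p A A * (bw p Aᶜ b * bind' R b) := by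
        rw [Finset.sum_ite_eq' A.powerset A
          (fun a => ∑ b ∈ Aᶜ.powerset, bw p A a * (bw p Aᶜ b * bind' R b)),
          if_pos (Finset.mem_powerset.mpr (le_refl A))]
    _ = p ^ A.card * ∑ a ∈ A.powerset, ∑ b ∈ Aᶜ.powerset,
          bw p A a * bw p Aᶜ b * bind' R (a ∪ b) := by
        have hbwA : bw p A A = p ^ A.card := by simp [bw]
        have : ∀ a ∈ A.powerset, ∀ b ∈ Aᶜ.powerset,
            bw p A a * bw p Aᶜ b * bind' R (a ∪ b)
              = bw p A a * (bw p Aᶜ b * bind' R b) := by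
          intro a ha b hb
          rw [bind', bind', if_congr (hR a b (Finset.mem_powerset.mp ha)) rfl rfl]; ring
        rw [Finset.sum_congr rfl fun a ha =>
          Finset.sum_congr rfl fun b hb => this a ha b hb]
        rw [← Finset.sum_mul_sum, sum_bw, one_mul, ← Finset.mul_sum, hbwA]

private lemma bern_harris_pin {p : ℝ} (hp0 : 0 ≤ p) (hp1 : p ≤ 1)
    (A : Finset E) (R : Finset E → Prop)
    (hdec : ∀ ω ω' : Finset E, ω' ⊆ ω → R ω → R ω') :
    bernProb p (fun ω => A ⊆ ω ∧ R ω) ≤ p ^ A.card * bernProb p R := by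
  have hD : Disjoint A Aᶜ := disjoint_compl_right
  have hU : A ∪ Aᶜ = (Finset.univ : Finset E) := Finset.union_compl A
  rw [bernProb_eq, bernProb_eq, ← hU, split_sum p hD, split_sum p hD]
  have key : ∀ a ∈ A.powerset, ∀ b ∈ Aᶜ.powerset, (A ⊆ a ∪ b ↔ a = A) := by
    intro a ha b hb
    rw [Finset.mem_powerset] at ha hb
    constructor
    · intro h
      refine Finset.Subset.antisymm ha fun x hx => ?_
      rcases Finset.mem_union.mp (h hx) with h' | h'
      · exact h'
      · exact absurd hx (by simpa using hb h')
    · intro h; rw [h]; exact Finset.subset_union_left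
  have lhs_eq : ∑ a ∈ A.powerset, ∑ b ∈ Aᶜ.powerset,
      bw p A a * bw p Aᶜ b * bind' (fun ω => A ⊆ ω ∧ R ω) (a ∪ b)
        = ∑ b ∈ Aᶜ.powerset, bw p A A * (bw p Aᶜ b * bind' R (A ∪ b)) := by
    calc ∑ a ∈ A.powerset, ∑ b ∈ Aᶜ.powerset,
        bw p A a * bw p Aᶜ b * bind' (fun ω => A ⊆ ω ∧ R ω) (a ∪ b)
        = ∑ a ∈ A.powerset, if a = A then
            ∑ b ∈ Aᶜ.powerset, bw p A a * (bw p Aᶜ b * bind' R (A ∪ b)) else 0 := by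
          refine Finset.sum_congr rfl fun a ha => ?_
          by_cases hA : a = A
          · rw [if_pos hA]
            refine Finset.sum_congr rfl fun b hb => ?_
            rw [hA]
            simp only [bind']
            by_cases h : R (A ∪ b)
            · rw [if_pos (⟨Finset.subset_union_left, h⟩ : A ⊆ A ∪ b ∧ R (A ∪ b)), if_pos h]
              ring
            · rw [if_neg (fun hc => h hc.2), if_neg h]
              ring
          · rw [if_neg hA]
            refine Finset.sum_eq_zero fun b hb => ?_
            simp only [bind']
            rw [if_neg (fun h => hA ((key a ha b hb).mp h.1))]
            ring
      _ = ∑ b ∈ Aᶜ.powerset, bw p A A * (bw p Aᶜ b * bind' R (A ∪ b)) := by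
          rw [Finset.sum_ite_eq' A.powerset A
            (fun a => ∑ b ∈ Aᶜ.powerset, bw p A a * (bw p Aᶜ b * bind' R (A ∪ b))),
            if_pos (Finset.mem_powerset.mpr (le_refl A))]
  rw [lhs_eq]
  have hbwA : bw p A A = p ^ A.card := by simp [bw]
  rw [← Finset.mul_sum]
  rw [hbwA]
  refine mul_le_mul_of_nonneg_left ?_ (pow_nonneg hp0 _)
  calc ∑ b ∈ Aᶜ.powerset, bw p Aᶜ b * bind' R (A ∪ b)
      = ∑ a ∈ A.powerset, bw p A a * ∑ b ∈ Aᶜ.powerset, bw p Aᶜ b * bind' R (A ∪ b) := by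
        rw [← Finset.sum_mul, sum_bw, one_mul]
    _ ≤ ∑ a ∈ A.powerset, ∑ b ∈ Aᶜ.powerset, bw p A a * bw p Aᶜ b * bind' R (a ∪ b) := by
        refine Finset.sum_le_sum fun a ha => ?_
        rw [Finset.mul_sum]
        refine Finset.sum_le_sum fun b hb => ?_
        have hmono : bind' R (A ∪ b) ≤ bind' R (a ∪ b) := by
          simp only [bind']
          by_cases h : R (A ∪ b)
          · rw [if_pos h, if_pos (hdec (A ∪ b) (a ∪ b)
              (Finset.union_subset_union (Finset.mem_powerset.mp ha) (le_refl b)) h)]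
          · rw [if_neg h]
            split <;> norm_num
        calc bw p A a * (bw p Aᶜ b * bind' R (A ∪ b))
            = bw p A a * bw p Aᶜ b * bind' R (A ∪ b) := by ring
          _ ≤ bw p A a * bw p Aᶜ b * bind' R (a ∪ b) :=
              mul_le_mul_of_nonneg_left hmono
                (mul_nonneg (bw_nonneg hp0 hp1 _ _) (bw_nonneg hp0 hp1 _ _))

private lemma bern_congr (p : ℝ) {Q R : Finset E → Prop} (h : ∀ ω, Q ω ↔ R ω) :
    bernProb p Q = bernProb p R :=
  Finset.sum_congr rfl fun ω _ => if_congr (h ω) rfl rfl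

private lemma bern_true (p : ℝ) : bernProb p (fun _ : Finset E => True) = 1 := by
  rw [bernProb_eq]
  simp only [bind', if_true, mul_one]
  exact sum_bw p _

private lemma bern_subset (p : ℝ) (A : Finset E) :
    bernProb p (fun ω => A ⊆ ω) = p ^ A.card := by
  have h := bern_indep p A (fun _ => True) (by simp)
  rw [bern_true, mul_one] at h
  rw [← h]
  exact bern_congr p fun ω => by tauto

private lemma bern_and_subsets (p : ℝ) (A B : Finset E) :
    bernProb p (fun ω => A ⊆ ω ∧ B ⊆ ω) = p ^ (A ∪ B).card := by
  rw [bern_congr p fun ω => (Finset.union_subset_iff (s := A) (t := B) (u := ω)).symm]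
  exact bern_subset p _

private lemma bern_nonneg {p : ℝ} (hp0 : 0 ≤ p) (hp1 : p ≤ 1) (Q : Finset E → Prop) :
    0 ≤ bernProb p Q := by
  refine Finset.sum_nonneg fun ω _ => ?_
  split
  · exact bw_nonneg hp0 hp1 Finset.univ ω
  · exact le_refl 0

private lemma bern_mono {p : ℝ} (hp0 : 0 ≤ p) (hp1 : p ≤ 1) {Q R : Finset E → Prop}
    (h : ∀ ω, Q ω → R ω) : bernProb p Q ≤ bernProb p R := by
  refine Finset.sum_le_sum fun ω _ => ?_
  by_cases hQ : Q ω
  · rw [if_pos hQ, if_pos (h ω hQ)]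
  · rw [if_neg hQ]
    split
    · exact bw_nonneg hp0 hp1 Finset.univ ω
    · exact le_refl 0

private lemma bern_le_one {p : ℝ} (hp0 : 0 ≤ p) (hp1 : p ≤ 1) (Q : Finset E → Prop) :
    bernProb p Q ≤ 1 := by
  rw [← bern_true (E := E) p]
  exact bern_mono hp0 hp1 fun ω _ => trivial

private lemma bern_subadd {p : ℝ} (hp0 : 0 ≤ p) (hp1 : p ≤ 1)
    {Q R1 R2 : Finset E → Prop} (h : ∀ ω, Q ω → R1 ω ∨ R2 ω) :
    bernProb p Q ≤ bernProb p R1 + bernProb p R2 := by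
  unfold bernProb
  rw [← Finset.sum_add_distrib]
  refine Finset.sum_le_sum fun ω _ => ?_
  have hw := bw_nonneg hp0 hp1 (Finset.univ : Finset E) ω
  simp only [bw, Finset.card_univ] at hw
  by_cases hQ : Q ω
  · rw [if_pos hQ]
    rcases h ω hQ with h' | h'
    · rw [if_pos h']
      have : (0:ℝ) ≤ if R2 ω then p ^ ω.card * (1 - p) ^ (Fintype.card E - ω.card) else 0 := by
        split
        · exact hw
        · exact le_refl 0
      linarith
    · rw [if_pos h' (c := R2 ω)]
      have : (0:ℝ) ≤ if R1 ω then p ^ ω.card * (1 - p) ^ (Fintype.card E - ω.card) else 0 := by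
        split
        · exact hw
        · exact le_refl 0
      linarith
  · rw [if_neg hQ]
    have h1 : (0:ℝ) ≤ if R1 ω then p ^ ω.card * (1 - p) ^ (Fintype.card E - ω.card) else 0 := by
      split
      · exact hw
      · exact le_refl 0
    have h2 : (0:ℝ) ≤ if R2 ω then p ^ ω.card * (1 - p) ^ (Fintype.card E - ω.card) else 0 := by
      split
      · exact hw
      · exact le_refl 0
    linarith

private lemma bern_union_bound {p : ℝ} (hp0 : 0 ≤ p) (hp1 : p ≤ 1)
    {ι : Type*} (s : Finset ι) (Qi : ι → Finset E → Prop) :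
    bernProb p (fun ω => ∃ i ∈ s, Qi i ω) ≤ ∑ i ∈ s, bernProb p (Qi i) := by
  unfold bernProb
  rw [Finset.sum_comm]
  refine Finset.sum_le_sum fun ω _ => ?_
  have hw := bw_nonneg hp0 hp1 (Finset.univ : Finset E) ω
  simp only [bw, Finset.card_univ] at hw
  by_cases hQ : ∃ i ∈ s, Qi i ω
  · obtain ⟨i, hi, hQi⟩ := hQ
    rw [if_pos ⟨i, hi, hQi⟩]
    calc p ^ ω.card * (1 - p) ^ (Fintype.card E - ω.card)
        = if Qi i ω then p ^ ω.card * (1 - p) ^ (Fintype.card E - ω.card) else 0 := by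
          rw [if_pos hQi]
      _ ≤ ∑ j ∈ s, if Qi j ω then p ^ ω.card * (1 - p) ^ (Fintype.card E - ω.card) else 0 := by
          refine Finset.single_le_sum (f := fun j =>
            if Qi j ω then p ^ ω.card * (1 - p) ^ (Fintype.card E - ω.card) else 0)
            (fun j _ => ?_) hi
          split
          · exact hw
          · exact le_refl 0
  · rw [if_neg hQ]
    refine Finset.sum_nonneg fun j _ => ?_
    split
    · exact hw
    · exact le_refl 0

end BernHelpers

/-- Harris-type lower bound for the conditional probability that all
elements of `E_j` are present given that no set `E_i`, `i ∈ N`, is fully present. -/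
theorem conditional_lower_bound {E : Type*} [Fintype E] [DecidableEq E]
    (p : ℝ) (hp0 : 0 ≤ p) (hp1 : p ≤ 1)
    {N : Type*} [Fintype N] (Ei : N → Finset E) (hne : ∀ i, (Ei i).Nonempty)
    (Ej : Finset E)
    (hpos : 0 < bernProb p (fun ω => ∀ i, ¬ Ei i ⊆ ω)) :
    (bernProb p (fun ω => Ej ⊆ ω ∧ ∀ i, ¬ Ei i ⊆ ω)
        / bernProb p (fun ω => ∀ i, ¬ Ei i ⊆ ω)
      ≥ bernProb p (fun ω => Ej ⊆ ω) -
        ∑ i ∈ Finset.univ.filter (fun i => (Ei i ∩ Ej).Nonempty),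
          bernProb p (fun ω => Ei i ⊆ ω ∧ Ej ⊆ ω)) ∧
    (bernProb p (fun ω => Ej ⊆ ω) -
        ∑ i ∈ Finset.univ.filter (fun i => (Ei i ∩ Ej).Nonempty),
          bernProb p (fun ω => Ei i ⊆ ω ∧ Ej ⊆ ω)
      = p ^ Ej.card -
        ∑ i ∈ Finset.univ.filter (fun i => (Ei i ∩ Ej).Nonempty),
          p ^ (Ei i ∪ Ej).card) := by
  have eq2 : (bernProb p (fun ω => Ej ⊆ ω) -
        ∑ i ∈ Finset.univ.filter (fun i => (Ei i ∩ Ej).Nonempty),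
          bernProb p (fun ω => Ei i ⊆ ω ∧ Ej ⊆ ω))
      = p ^ Ej.card -
        ∑ i ∈ Finset.univ.filter (fun i => (Ei i ∩ Ej).Nonempty),
          p ^ (Ei i ∪ Ej).card := by
    rw [bern_subset p Ej]
    congr 1
    exact Finset.sum_congr rfl fun i _ => bern_and_subsets p (Ei i) Ej
  refine ⟨?_, eq2⟩
  -- the first part
  set I := Finset.univ.filter (fun i => (Ei i ∩ Ej).Nonempty) with hI
  set B : Finset E → Prop := fun ω => ∀ i, ¬ Ei i ⊆ ω with hB
  set R : Finset E → Prop := fun ω => ∀ i, Ei i ∩ Ej = ∅ → ¬ Ei i ⊆ ω with hRdef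
  have hR : ∀ a b : Finset E, a ⊆ Ej → (R (a ∪ b) ↔ R b) := by
    intro a b ha
    constructor
    · intro h i hdisj hsub
      exact h i hdisj (hsub.trans Finset.subset_union_right)
    · intro h i hdisj hsub
      refine h i hdisj fun x hx => ?_
      rcases Finset.mem_union.mp (hsub hx) with h' | h'
      · exfalso
        have : x ∈ Ei i ∩ Ej := Finset.mem_inter.mpr ⟨hx, ha h'⟩
        rw [hdisj] at this
        exact absurd this (Finset.notMem_empty x)
      · exact h'
  have hdec : ∀ ω ω' : Finset E, ω' ⊆ ω → R ω → R ω' := by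
    intro ω ω' hsub h i hdisj hEi
    exact h i hdisj (hEi.trans hsub)
  have key1 : bernProb p (fun ω => Ej ⊆ ω ∧ R ω) = p ^ Ej.card * bernProb p R :=
    bern_indep p Ej R hR
  have key2 : bernProb p (fun ω => Ej ⊆ ω ∧ R ω)
      ≤ bernProb p (fun ω => Ej ⊆ ω ∧ B ω)
        + bernProb p (fun ω => ∃ i ∈ I, Ei i ∪ Ej ⊆ ω ∧ R ω) := by
    refine bern_subadd hp0 hp1 fun ω hω => ?_
    by_cases hBω : B ω
    · exact Or.inl ⟨hω.1, hBω⟩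
    · right
      simp only [hB, not_forall, not_not] at hBω
      obtain ⟨i, hi⟩ := hBω
      refine ⟨i, ?_, Finset.union_subset hi hω.1, hω.2⟩
      rw [hI, Finset.mem_filter]
      refine ⟨Finset.mem_univ i, Finset.nonempty_iff_ne_empty.mpr fun hemp => ?_⟩
      exact hω.2 i hemp hi
  have key3 : bernProb p (fun ω => ∃ i ∈ I, Ei i ∪ Ej ⊆ ω ∧ R ω)
      ≤ ∑ i ∈ I, bernProb p (fun ω => Ei i ∪ Ej ⊆ ω ∧ R ω) :=
    bern_union_bound hp0 hp1 I _
  have key4 : ∀ i ∈ I, bernProb p (fun ω => Ei i ∪ Ej ⊆ ω ∧ R ω)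
      ≤ p ^ (Ei i ∪ Ej).card * bernProb p R := fun i _ =>
    bern_harris_pin hp0 hp1 (Ei i ∪ Ej) R hdec
  have key5 : bernProb p B ≤ bernProb p R :=
    bern_mono hp0 hp1 fun ω h i _ => h i
  have hR1 : bernProb p R ≤ 1 := bern_le_one hp0 hp1 R
  have hnum0 : 0 ≤ bernProb p (fun ω => Ej ⊆ ω ∧ B ω) := bern_nonneg hp0 hp1 _
  have hsg : ∑ i ∈ I, bernProb p (fun ω => Ei i ⊆ ω ∧ Ej ⊆ ω)
      = ∑ i ∈ I, p ^ (Ei i ∪ Ej).card :=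
    Finset.sum_congr rfl fun i _ => bern_and_subsets p (Ei i) Ej
  have hnum : (p ^ Ej.card - ∑ i ∈ I, p ^ (Ei i ∪ Ej).card) * bernProb p R
      ≤ bernProb p (fun ω => Ej ⊆ ω ∧ B ω) := by
    have hsum : ∑ i ∈ I, bernProb p (fun ω => Ei i ∪ Ej ⊆ ω ∧ R ω)
        ≤ (∑ i ∈ I, p ^ (Ei i ∪ Ej).card) * bernProb p R := by
      rw [Finset.sum_mul]
      exact Finset.sum_le_sum key4
    have hexp : (p ^ Ej.card - ∑ i ∈ I, p ^ (Ei i ∪ Ej).card) * bernProb p R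
        = p ^ Ej.card * bernProb p R
          - (∑ i ∈ I, p ^ (Ei i ∪ Ej).card) * bernProb p R := by ring
    linarith
  rw [ge_iff_le, le_div_iff₀ hpos, bern_subset p Ej, hsg]
  by_cases hcase : 0 ≤ p ^ Ej.card - ∑ i ∈ I, p ^ (Ei i ∪ Ej).card
  · calc (p ^ Ej.card - ∑ i ∈ I, p ^ (Ei i ∪ Ej).card) * bernProb p B
        ≤ (p ^ Ej.card - ∑ i ∈ I, p ^ (Ei i ∪ Ej).card) * bernProb p R :=
          mul_le_mul_of_nonneg_left key5 hcase
      _ ≤ bernProb p (fun ω => Ej ⊆ ω ∧ B ω) := hnum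
      _ = bernProb p (fun ω => Ej ⊆ ω ∧ ∀ i, ¬ Ei i ⊆ ω) := rfl
  · push_neg at hcase
    calc (p ^ Ej.card - ∑ i ∈ I, p ^ (Ei i ∪ Ej).card) * bernProb p B
        ≤ 0 := mul_nonpos_of_nonpos_of_nonneg hcase.le hpos.le
      _ ≤ bernProb p (fun ω => Ej ⊆ ω ∧ ∀ i, ¬ Ei i ⊆ ω) := hnum0

end
end

section
/- Let F be a strictly 1-balanced graph with 1-density d_1(F) = e(F)/(v(F)−1). Then every subgraph S of F with at least one edge and e(S) < e(F) satisfies e(S) < d_1(F) · (v(S) − c(S)), where v(S) and c(S) denote the number of vertices and the number of connected components of S (isolated vertices counting as components). -/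
open scoped Classical
open Filter Asymptotics

noncomputable section

/-!
Split `S` into the pieces spanned by its connected components. Each piece has fewer edges than
`F`, so it is a proper subgraph and strict 1-balancedness bounds its edge count by
`d₁(F) · (v - 1)`, strictly as soon as it has an edge. Summing over the `c(S)` components gives
`e(S) < d₁(F) · (v(S) - c(S))`, the strict inequality coming from a component containing an edge.
-/

namespace SimpleGraph.Subgraph

open scoped Function

variable {V : Type*} {G : SimpleGraph V} (S : G.Subgraph)

def componentSubgraph (K : S.coe.ConnectedComponent) : G.Subgraph :=
  S.induce (Subtype.val '' K.supp)

lemma componentSubgraph_le (K : S.coe.ConnectedComponent) : S.componentSubgraph K ≤ S :=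
  (induce_mono_right (Subtype.coe_image_subset _ _)).trans induce_self_verts.le

lemma componentSubgraph_verts_nonempty (K : S.coe.ConnectedComponent) :
    (S.componentSubgraph K).verts.Nonempty :=
  K.nonempty_supp.image _

lemma iUnion_verts_componentSubgraph : ⋃ K, (S.componentSubgraph K).verts = S.verts := by
  simp only [componentSubgraph, induce_verts, ← Set.image_iUnion,
    SimpleGraph.iUnion_connectedComponentSupp, Set.image_univ, Subtype.range_coe]

lemma pairwise_disjoint_verts_componentSubgraph :
    Pairwise (Disjoint on fun K => (S.componentSubgraph K).verts) := fun _ _ hKK' =>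
  Set.disjoint_image_of_injective Subtype.val_injective
    (SimpleGraph.pairwise_disjoint_supp_connectedComponent _ hKK')

lemma pairwise_disjoint_edgeSet_componentSubgraph :
    Pairwise (Disjoint on fun K => (S.componentSubgraph K).edgeSet) := fun _ _ hKK' =>
  (disjoint_verts_iff_disjoint.mp (S.pairwise_disjoint_verts_componentSubgraph hKK')).edgeSet

lemma iUnion_edgeSet_componentSubgraph : ⋃ K, (S.componentSubgraph K).edgeSet = S.edgeSet := by
  refine (Set.iUnion_subset fun K => edgeSet_mono (S.componentSubgraph_le K)).antisymm ?_
  rintro ⟨u, v⟩ (huv : S.Adj u v)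
  have hadj : S.coe.Adj ⟨u, huv.fst_mem⟩ ⟨v, huv.snd_mem⟩ := huv
  refine Set.mem_iUnion.2 ⟨S.coe.connectedComponentMk ⟨u, huv.fst_mem⟩, ?_⟩
  exact ⟨⟨_, rfl, rfl⟩, ⟨_, (SimpleGraph.ConnectedComponent.connectedComponentMk_eq_of_adj
    hadj).symm, rfl⟩, huv⟩

variable [Finite V]

lemma ncard_verts_eq_finsum_componentSubgraph :
    S.verts.ncard = ∑ᶠ K, (S.componentSubgraph K).verts.ncard := by
  rw [← Set.ncard_iUnion_of_finite (fun _ => Set.toFinite _)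
    S.pairwise_disjoint_verts_componentSubgraph, iUnion_verts_componentSubgraph]

lemma ncard_edgeSet_eq_finsum_componentSubgraph :
    S.edgeSet.ncard = ∑ᶠ K, (S.componentSubgraph K).edgeSet.ncard := by
  rw [← Set.ncard_iUnion_of_finite (fun _ => Set.toFinite _)
    S.pairwise_disjoint_edgeSet_componentSubgraph, iUnion_edgeSet_componentSubgraph]

end SimpleGraph.Subgraph

-- For `r ≤ 1` there are no edges, so the junk denominators `0` and `-1` do no harm.
lemma d1_nonneg {r : ℕ} (F : SimpleGraph (Fin r)) : 0 ≤ d1 F := by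
  rcases Nat.eq_zero_or_pos r with rfl | hr
  · simp [d1, edgeCnt, Set.eq_empty_of_isEmpty]
  · exact div_nonneg (Nat.cast_nonneg _) (sub_nonneg.2 (by exact_mod_cast hr))

namespace Strictly1Balanced

variable {r : ℕ} {F : SimpleGraph (Fin r)} {T : F.Subgraph}

lemma ncard_edgeSet_lt (hF : Strictly1Balanced F) (hT : T ≠ ⊤) (he : T.edgeSet.Nonempty) :
    (T.edgeSet.ncard : ℝ) < d1 F * ((T.verts.ncard : ℝ) - 1) := by
  have hv : 2 ≤ T.verts.ncard := by
    obtain ⟨⟨u, v⟩, huv : T.Adj u v⟩ := he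
    exact (Set.one_lt_ncard_iff (Set.toFinite _)).2
      ⟨u, v, huv.fst_mem, huv.snd_mem, huv.adj_sub.ne⟩
  have hv' : (1 : ℝ) < T.verts.ncard := by exact_mod_cast hv
  have hdensity := hF T hT hv ((Set.ncard_pos (Set.toFinite _)).2 he)
  rwa [div_lt_iff₀ (sub_pos.2 hv')] at hdensity

lemma ncard_edgeSet_le (hF : Strictly1Balanced F) (hT : T ≠ ⊤) (hv : T.verts.Nonempty) :
    (T.edgeSet.ncard : ℝ) ≤ d1 F * ((T.verts.ncard : ℝ) - 1) := by
  rcases T.edgeSet.eq_empty_or_nonempty with he | he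
  · have hv' : (1 : ℝ) ≤ T.verts.ncard := by
      exact_mod_cast (Set.ncard_pos (Set.toFinite _)).2 hv
    rw [he, Set.ncard_empty, Nat.cast_zero]
    exact mul_nonneg (d1_nonneg F) (sub_nonneg.2 hv')
  · exact (hF.ncard_edgeSet_lt hT he).le

end Strictly1Balanced

open SimpleGraph.Subgraph in
/-- If `F` is strictly 1-balanced then every subgraph `S` of `F` with at
least one edge and `e(S) < e(F)` satisfies `e(S) < d₁(F)·(v(S) - c(S))`. -/
theorem subgraph_edge_bound {r : ℕ} (F : SimpleGraph (Fin r)) (hF : Strictly1Balanced F)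
    (S : F.Subgraph) (h1 : 1 ≤ S.edgeSet.ncard) (h2 : S.edgeSet.ncard < edgeCnt F) :
    (S.edgeSet.ncard : ℝ)
      < d1 F * ((S.verts.ncard : ℝ) - (Nat.card S.coe.ConnectedComponent : ℝ)) := by
  have hproper (K : S.coe.ConnectedComponent) : S.componentSubgraph K ≠ ⊤ := by
    intro hK
    have hle := Set.ncard_le_ncard (edgeSet_mono (S.componentSubgraph_le K)) (Set.toFinite _)
    rw [hK, edgeSet_top] at hle
    exact (hle.trans_lt h2).false
  obtain ⟨K₀, hK₀⟩ : ∃ K, (S.componentSubgraph K).edgeSet.Nonempty := by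
    obtain ⟨e, he⟩ := Set.nonempty_of_ncard_ne_zero (Nat.one_le_iff_ne_zero.1 h1)
    rw [← S.iUnion_edgeSet_componentSubgraph] at he
    obtain ⟨K, hK⟩ := Set.mem_iUnion.1 he
    exact ⟨K, e, hK⟩
  calc (S.edgeSet.ncard : ℝ) = ∑ K, ((S.componentSubgraph K).edgeSet.ncard : ℝ) := by
        rw [S.ncard_edgeSet_eq_finsum_componentSubgraph, finsum_eq_sum_of_fintype, Nat.cast_sum]
    _ < ∑ K, d1 F * (((S.componentSubgraph K).verts.ncard : ℝ) - 1) :=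
        Finset.sum_lt_sum
          (fun K _ => hF.ncard_edgeSet_le (hproper K) (S.componentSubgraph_verts_nonempty K))
          ⟨K₀, Finset.mem_univ _, hF.ncard_edgeSet_lt (hproper K₀) hK₀⟩
    _ = d1 F * ((S.verts.ncard : ℝ) - (Nat.card S.coe.ConnectedComponent : ℝ)) := by
        rw [← Finset.mul_sum, Finset.sum_sub_distrib, ← Nat.cast_sum, ← finsum_eq_sum_of_fintype,
          ← S.ncard_verts_eq_finsum_componentSubgraph, Nat.card_eq_fintype_card]
        simp

end
end
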